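/- arXiv:1304.0411 — 7 statements merged into one kernel-verified Lean document; each statement's English description precedes it below -/
import Mathlib

section
/- Let σ : ℤ → ℤ be a function. Suppose a is a positive integer with σ(i) = σ(i + a) for all i ∈ ℤ, and b is a positive integer such that Σ_{i=0}^{b} (−1)^i C(b, i) σ(N − i) = 0 for all N ∈ ℤ. Then σ(i) = σ(j) for all integers i and j. -/
/-!
The hypothesis on `σ` says that its `b`-th difference with step `-1` vanishes. Differences of a
function of period `a` again have period `a`, and a function of period `a` whose difference `c`
is constant has `a • c = f (x + a) - f x = 0`, so `c = 0`. By induction on `b`, the first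
difference of `σ` already vanishes, i.e. `σ` has period `1`.
-/

open Finset Function fwdDiff

section

variable {M G : Type*} [AddCommMonoid M] [AddCommGroup G]

lemma Function.Periodic.fwdDiff {f : M → G} {c : M} (hf : Periodic f c) (h : M) :
    Periodic (Δ_[h] f) c :=
  (hf.add_const h).sub hf

lemma fwdDiff_eq_zero_of_periodic [IsAddTorsionFree G] {f : M → G} {h : M} {a : ℕ}
    (ha : a ≠ 0) (hf : Periodic f (a • h)) (hΔ : Periodic (Δ_[h] f) h) : Δ_[h] f = 0 := by
  funext x
  have htelescope : a • Δ_[h] f x = f (x + a • h) - f x := calc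
    a • Δ_[h] f x = ∑ _k ∈ range a, Δ_[h] f x := by simp
    _ = ∑ k ∈ range a, (f (x + (k + 1) • h) - f (x + k • h)) :=
      sum_congr rfl fun k _ ↦ by rw [← hΔ.nsmul k x, fwdDiff, succ_nsmul, add_assoc]
    _ = f (x + a • h) - f x := by simpa using sum_range_sub (fun k : ℕ ↦ f (x + k • h)) a
  rwa [hf x, sub_self, nsmul_eq_zero_iff_right ha] at htelescope

lemma fwdDiff_eq_zero_of_fwdDiff_iter_eq_zero [IsAddTorsionFree G] {h : M} {a : ℕ}
    (ha : a ≠ 0) (n : ℕ) {f : M → G} (hf : Periodic f (a • h)) (hn : Δ_[h] ^[n] f = 0) :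
    Δ_[h] f = 0 := by
  induction n generalizing f with
  | zero => funext x; simp [show f = 0 from hn, fwdDiff]
  | succ n ih =>
    have hΔΔ : Δ_[h] (Δ_[h] f) = 0 := ih (hf.fwdDiff h) hn
    exact fwdDiff_eq_zero_of_periodic ha hf fun x ↦ sub_eq_zero.mp (congrFun hΔΔ x)

lemma fwdDiff_iter_neg_one_eq_sum (f : ℤ → G) (b : ℕ) (N : ℤ) :
    Δ_[-1] ^[b] f N = (-1) ^ b • ∑ i ∈ range (b + 1), ((-1 : ℤ) ^ i * b.choose i) • f (N - i) := by
  rw [fwdDiff_iter_eq_sum_shift, smul_sum]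
  refine sum_congr rfl fun k hk ↦ ?_
  rw [smul_smul, ← mul_assoc, ← pow_add, nsmul_eq_mul, mul_neg_one, ← sub_eq_add_neg]
  obtain ⟨j, rfl⟩ := Nat.exists_eq_add_of_le (mem_range_succ_iff.mp hk)
  have hsq : (-1 : ℤ) ^ k * (-1) ^ k = 1 := by rw [← pow_add, Even.neg_one_pow ⟨k, rfl⟩]
  rw [Nat.add_sub_cancel_left, pow_add]
  congr 1
  linear_combination -((-1) ^ j * ((k + j).choose k : ℤ)) * hsq

end

theorem stmt_1_general (σ : ℤ → ℤ) (a : ℕ) (ha : 0 < a)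
    (hper : ∀ i : ℤ, σ i = σ (i + a))
    (b : ℕ)
    (hsum : ∀ N : ℤ, ∑ i ∈ Finset.range (b + 1),
      (-1 : ℤ) ^ i * (b.choose i : ℤ) * σ (N - i) = 0) :
    ∀ i j : ℤ, σ i = σ j := by
  have hperiodic : Periodic σ (a • (-1)) := by
    simpa using Periodic.neg (fun i ↦ (hper i).symm : Periodic σ a)
  have hiter : Δ_[-1] ^[b] σ = 0 := by
    funext N
    simpa [fwdDiff_iter_neg_one_eq_sum, mul_assoc] using hsum N
  have hΔ : Δ_[-1] σ = 0 := fwdDiff_eq_zero_of_fwdDiff_iter_eq_zero ha.ne' b hperiodic hiter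
  have hone : Periodic σ 1 := by
    simpa using Periodic.neg fun x ↦ sub_eq_zero.mp (congrFun hΔ x)
  intro i j
  simpa using (hone.int_mul_eq i).trans (hone.int_mul_eq j).symm

/-- If `σ : ℤ → ℤ` is periodic with period `a ≥ 1` and satisfies
`∑_{i=0}^{b} (−1)^i C(b,i) σ(N−i) = 0` for all `N`, then `σ` is constant. -/
theorem stmt_1 (σ : ℤ → ℤ) (a : ℕ) (ha : 0 < a)
    (hper : ∀ i : ℤ, σ i = σ (i + a))
    (b : ℕ) (hb : 0 < b)
    (hsum : ∀ N : ℤ, ∑ i ∈ Finset.range (b + 1),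
      (-1 : ℤ) ^ i * (b.choose i : ℤ) * σ (N - i) = 0) :
    ∀ i j : ℤ, σ i = σ j :=
  stmt_1_general σ a ha hper b hsum
end

section
/- Let D be a positive integer and let p(t) = Σ_{i≥0} c_i t^i be a polynomial in ℤ[t] (so c_i = 0 for all i greater than the degree of p). Then 1 + t + t² + ⋯ + t^{D−1} divides p(t) in ℤ[t] if and only if the D sums σ_j = Σ_{ℓ≥0} c_{j+ℓD}, for j = 0, 1, …, D−1, are all equal. -/
open Polynomial Finset

/-- For a positive integer `D` and `p = Σ cᵢ tⁱ ∈ ℤ[t]`, the polynomial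
`1 + t + ⋯ + t^(D−1)` divides `p` in `ℤ[t]` if and only if the `D` sums
`σ_j = Σ_{ℓ≥0} c_{j+ℓD}` (for `0 ≤ j < D`) are all equal. -/
theorem stmt_2 (D : ℕ) (hD : 0 < D) (p : Polynomial ℤ) :
    ((∑ i ∈ Finset.range D, (Polynomial.X : Polynomial ℤ) ^ i) ∣ p) ↔
      ∀ j₁ j₂ : ℕ, j₁ < D → j₂ < D →
        (∑ ℓ ∈ Finset.range (p.natDegree + 1), p.coeff (j₁ + ℓ * D)) =
          (∑ ℓ ∈ Finset.range (p.natDegree + 1), p.coeff (j₂ + ℓ * D)) := by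
  set N := p.natDegree + 1 with hN
  set Φ : Polynomial ℤ := ∑ i ∈ Finset.range D, X ^ i with hΦ
  set q : Polynomial ℤ :=
    ∑ j ∈ Finset.range D, C (∑ ℓ ∈ Finset.range N, p.coeff (j + ℓ * D)) * X ^ j with hq
  have hqcoeff : ∀ j < D, q.coeff j = ∑ ℓ ∈ Finset.range N, p.coeff (j + ℓ * D) := by
    intro j hj
    rw [hq, finset_sum_coeff, Finset.sum_eq_single j]
    · rw [coeff_C_mul, coeff_X_pow, if_pos rfl, mul_one]
    · intro b _ hbj
      rw [coeff_C_mul, coeff_X_pow, if_neg (Ne.symm hbj), mul_zero]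
    · intro h; exact absurd (mem_range.mpr hj) h
  have hΦcoeff : ∀ j < D, Φ.coeff j = 1 := by
    intro j hj
    rw [hΦ, finset_sum_coeff, Finset.sum_eq_single j]
    · simp
    · intro b _ hbj
      simp [coeff_X_pow, Ne.symm hbj]
    · intro h; exact absurd (mem_range.mpr hj) h
  have hgeom : Φ * (X - 1) = X ^ D - 1 := geom_sum_mul X D
  have hdvd1 : Φ ∣ (X : Polynomial ℤ) ^ D - 1 := ⟨X - 1, hgeom.symm⟩
  have hkey : ∀ j ℓ : ℕ, (X : Polynomial ℤ) ^ D - 1 ∣ X ^ (j + ℓ * D) - X ^ j := by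
    intro j ℓ
    have h1 : (X : Polynomial ℤ) ^ D - 1 ∣ (X ^ D) ^ ℓ - 1 := by
      simpa using sub_dvd_pow_sub_pow ((X : Polynomial ℤ) ^ D) 1 ℓ
    have h2 : (X : Polynomial ℤ) ^ (j + ℓ * D) - X ^ j = X ^ j * ((X ^ D) ^ ℓ - 1) := by
      ring
    rw [h2]; exact h1.mul_left _
  have hp : p = ∑ x ∈ Finset.range D ×ˢ Finset.range N,
      C (p.coeff (x.1 + x.2 * D)) * X ^ (x.1 + x.2 * D) := by
    have hlt : p.natDegree < D * N := by
      calc p.natDegree < N := Nat.lt_succ_self _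
        _ ≤ D * N := Nat.le_mul_of_pos_left _ hD
    rw [Finset.sum_nbij' (i := fun x : ℕ × ℕ => x.1 + x.2 * D)
      (j := fun i : ℕ => (i % D, i / D)) (t := Finset.range (D * N))
      (g := fun i => C (p.coeff i) * X ^ i)]
    · conv_lhs => rw [p.as_sum_range' (D * N) hlt]
      exact Finset.sum_congr rfl fun i _ => (C_mul_X_pow_eq_monomial).symm
    · rintro ⟨j, ℓ⟩ hx
      simp only [Finset.mem_product, Finset.mem_range] at hx
      simp only [Finset.mem_range]
      calc j + ℓ * D < D + ℓ * D := by omega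
        _ = (ℓ + 1) * D := by ring
        _ ≤ N * D := Nat.mul_le_mul_right _ (by omega)
        _ = D * N := Nat.mul_comm _ _
    · intro i hi
      simp only [Finset.mem_range] at hi
      simp only [Finset.mem_product, Finset.mem_range]
      exact ⟨Nat.mod_lt _ hD, Nat.div_lt_of_lt_mul (Nat.mul_comm D N ▸ hi)⟩
    · rintro ⟨j, ℓ⟩ hx
      simp only [Finset.mem_product, Finset.mem_range] at hx
      simp [Nat.add_mul_mod_self_right, Nat.mod_eq_of_lt hx.1,
        Nat.add_mul_div_right _ _ hD, Nat.div_eq_of_lt hx.1]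
    · intro i _
      simp [Nat.mod_add_div']
    · intro x _
      rfl
  have hq' : q = ∑ x ∈ Finset.range D ×ˢ Finset.range N,
      C (p.coeff (x.1 + x.2 * D)) * X ^ x.1 := by
    rw [hq, Finset.sum_product]
    refine Finset.sum_congr rfl fun j _ => ?_
    rw [map_sum, Finset.sum_mul]
  have hpq : Φ ∣ p - q := by
    refine hdvd1.trans ?_
    rw [hp, hq', ← Finset.sum_sub_distrib]
    refine Finset.dvd_sum fun x _ => ?_
    rw [← mul_sub]
    exact (hkey x.1 x.2).mul_left _
  have hiff : Φ ∣ p ↔ Φ ∣ q := by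
    constructor
    · intro h
      simpa using h.sub hpq
    · intro h
      simpa using hpq.add h
  rw [hiff]
  have hΦmonic : Φ.Monic := monic_geom_sum_X hD.ne'
  have hΦdeg : Φ.natDegree = D - 1 := by
    have h2 : ((X : Polynomial ℤ) ^ D - 1).natDegree = D := by
      simpa using (natDegree_X_pow_sub_C (n := D) (r := (1 : ℤ)))
    have hX1 : (X - 1 : Polynomial ℤ) ≠ 0 := by
      simpa using X_sub_C_ne_zero (1 : ℤ)
    have h3 : Φ.natDegree + (X - 1 : Polynomial ℤ).natDegree = D := by
      rw [← natDegree_mul hΦmonic.ne_zero hX1, hgeom, h2]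
    have h4 : (X - 1 : Polynomial ℤ).natDegree = 1 := by
      simpa using natDegree_X_sub_C (1 : ℤ)
    omega
  constructor
  · rintro ⟨r, hr⟩ j₁ j₂ hj₁ hj₂
    rcases eq_or_ne r 0 with h0 | h0
    · have hq0 : q = 0 := by rw [hr, h0, mul_zero]
      rw [← hqcoeff j₁ hj₁, ← hqcoeff j₂ hj₂, hq0]
      simp
    · have hqdeg : q.natDegree ≤ D - 1 := by
        refine natDegree_sum_le_of_forall_le _ _ fun j hj => ?_
        refine (natDegree_C_mul_le _ _).trans ?_
        simp only [natDegree_X_pow]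
        exact Nat.le_sub_one_of_lt (mem_range.mp hj)
      have hrdeg : r.natDegree = 0 := by
        have hmul : q.natDegree = Φ.natDegree + r.natDegree := by
          rw [hr, natDegree_mul hΦmonic.ne_zero h0]
        omega
      have hr0 : r = C (r.coeff 0) := eq_C_of_natDegree_eq_zero hrdeg
      have hco : ∀ j < D, q.coeff j = r.coeff 0 := by
        intro j hj
        rw [hr, hr0, coeff_mul_C, hΦcoeff j hj, one_mul]
        simp
      rw [← hqcoeff j₁ hj₁, ← hqcoeff j₂ hj₂, hco j₁ hj₁, hco j₂ hj₂]
  · intro h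
    refine ⟨C (∑ ℓ ∈ Finset.range N, p.coeff (0 + ℓ * D)), ?_⟩
    rw [hq, hΦ, Finset.sum_mul]
    refine Finset.sum_congr rfl fun j hj => ?_
    rw [h j 0 (mem_range.mp hj) hD]
    ring
end

section
/- Let S be a standard graded algebra over a field k with s₁ = dim_k S_1 ≥ 1, and let θ ∈ S_d be a homogeneous element of degree d ≥ 2. Then there exist square matrices M and M̌ of size 2^{s₁−1} × 2^{s₁−1} with entries in S, each entry being a homogeneous element of positive degree (in particular each entry lies in the irrelevant ideal S₊), such that M · M̌ = θ · I and M̌ · M = θ · I, where I denotes the 2^{s₁−1} × 2^{s₁−1} identity matrix. -/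
/-!
Since `S₁ · S_{d-1} = S_d`, we can write `θ = ∑ xᵢ yᵢ` with `x₁, …, x_{s₁}` a basis of `S₁` and
`yᵢ ∈ S_{d-1}`. If `M M̌ = M̌ M = θ' · 1`, then the block matrices `[[M, a], [b, -M̌]]` and
`[[M̌, a], [b, -M]]` factor `ab + θ'` at twice the size. Starting from the `1 × 1` factorization
`x₁ · y₁` and adding the remaining `s₁ - 1` terms one at a time yields matrices of size
`2^(s₁-1)` whose entries are `0`, `±xᵢ` or `±yᵢ`, all homogeneous of degree `1` or `d - 1 ≥ 1`.
-/

open Matrix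

section MatrixFactorization

variable {m n R : Type*} [DecidableEq m] [CommRing R]

section Entries

variable {P : R → Prop}

theorem forall_smul_one_apply (h0 : P 0) {a : R} (ha : P a) :
    ∀ i j, P ((a • 1 : Matrix m m R) i j) := by
  intro i j
  rw [Matrix.smul_apply, one_apply]
  split_ifs <;> simpa

theorem forall_fromBlocks_apply (h0 : P 0) (hneg : ∀ r, P r → P (-r)) {M N : Matrix m m R}
    {a b : R} (hM : ∀ i j, P (M i j)) (hN : ∀ i j, P (N i j)) (ha : P a) (hb : P b) :
    ∀ i j, P (fromBlocks M (a • 1) (b • 1) (-N) i j) := by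
  rintro (i | i) (j | j)
  · exact hM i j
  · exact forall_smul_one_apply h0 ha i j
  · exact forall_smul_one_apply h0 hb i j
  · exact hneg _ (hN i j)

end Entries

variable [Fintype m] [Fintype n] [DecidableEq n]

def IsMatrixFactorization (θ : R) (M N : Matrix m m R) : Prop :=
  M * N = θ • 1 ∧ N * M = θ • 1

namespace IsMatrixFactorization

variable {θ : R} {M N : Matrix m m R}

theorem symm (h : IsMatrixFactorization θ M N) : IsMatrixFactorization θ N M :=
  And.symm h

theorem reindex (h : IsMatrixFactorization θ M N) (e : m ≃ n) :
    IsMatrixFactorization θ (reindex e e M) (reindex e e N) := by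
  constructor <;>
    simp only [reindex_apply, submatrix_mul_equiv, h.1, h.2, submatrix_smul, Pi.smul_apply,
      submatrix_one_equiv]

theorem smul_one (a b : R) : IsMatrixFactorization (a * b) (a • 1 : Matrix m m R) (b • 1) := by
  constructor <;> simp [smul_smul, mul_comm b a]

theorem fromBlocks_mul_fromBlocks (h : IsMatrixFactorization θ M N) (a b : R) :
    fromBlocks M (a • 1) (b • 1) (-N) * fromBlocks N (a • 1) (b • 1) (-M) =
      (a * b + θ) • (1 : Matrix (m ⊕ m) (m ⊕ m) R) := by
  rw [fromBlocks_multiply, ← fromBlocks_one, fromBlocks_smul, neg_mul_neg, h.1, h.2]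
  congr 1 <;> simp [add_smul, smul_smul, mul_comm b a, add_comm]

theorem fromBlocks (h : IsMatrixFactorization θ M N) (a b : R) :
    IsMatrixFactorization (a * b + θ) (fromBlocks M (a • 1) (b • 1) (-N))
      (fromBlocks N (a • 1) (b • 1) (-M)) :=
  ⟨h.fromBlocks_mul_fromBlocks a b, h.symm.fromBlocks_mul_fromBlocks a b⟩

end IsMatrixFactorization

theorem exists_isMatrixFactorization_sum_mul {P : R → Prop} (h0 : P 0)
    (hneg : ∀ r, P r → P (-r)) (n : ℕ) {x y : Fin (n + 1) → R}
    (hx : ∀ i, P (x i)) (hy : ∀ i, P (y i)) :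
    ∃ M N : Matrix (Fin (2 ^ n)) (Fin (2 ^ n)) R, (∀ i j, P (M i j)) ∧ (∀ i j, P (N i j)) ∧
      IsMatrixFactorization (∑ i, x i * y i) M N := by
  induction n with
  | zero =>
    refine ⟨x 0 • 1, y 0 • 1, forall_smul_one_apply h0 (hx 0), forall_smul_one_apply h0 (hy 0),
      ?_⟩
    simpa using IsMatrixFactorization.smul_one (x 0) (y 0)
  | succ n ih =>
    obtain ⟨M, N, hM, hN, hMN⟩ := ih (fun i => hx i.succ) (fun i => hy i.succ)
    let e := finSumFinEquiv.trans (finCongr (Nat.two_pow_succ n).symm)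
    refine ⟨reindex e e (fromBlocks M (x 0 • 1) (y 0 • 1) (-N)),
      reindex e e (fromBlocks N (x 0 • 1) (y 0 • 1) (-M)),
      fun i j => forall_fromBlocks_apply h0 hneg hM hN (hx 0) (hy 0) _ _,
      fun i j => forall_fromBlocks_apply h0 hneg hN hM (hx 0) (hy 0) _ _, ?_⟩
    rw [Fin.sum_univ_succ]
    exact (hMN.fromBlocks (x 0) (y 0)).reindex e

end MatrixFactorization

theorem Submodule.exists_eq_sum_mul_of_mem_mul {R A ι : Type*} [CommSemiring R] [Semiring A]
    [Algebra R A] [Fintype ι] {V W : Submodule R A} (b : Module.Basis ι R V) {z : A}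
    (hz : z ∈ V * W) : ∃ y : ι → A, (∀ i, y i ∈ W) ∧ z = ∑ i, (b i : A) * y i := by
  induction hz using Submodule.mul_induction_on' with
  | mem_mul_mem v hv w hw =>
    refine ⟨fun i => b.repr ⟨v, hv⟩ i • w, fun i => W.smul_mem _ hw, ?_⟩
    have hv_sum : ∑ i, b.repr ⟨v, hv⟩ i • (b i : A) = v := by
      simpa only [Submodule.coe_sum, Submodule.coe_smul] using
        congrArg Subtype.val (b.sum_repr ⟨v, hv⟩)
    simp only [mul_smul_comm, ← smul_mul_assoc, ← Finset.sum_mul, hv_sum]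
  | add z _ z' _ hz hz' =>
    obtain ⟨y, hy, rfl⟩ := hz
    obtain ⟨y', hy', rfl⟩ := hz'
    exact ⟨y + y', fun i => W.add_mem (hy i) (hy' i), by
      simp only [Pi.add_apply, mul_add, Finset.sum_add_distrib]⟩

theorem stmt_3_general {k S : Type*} [Field k] [CommRing S] [Algebra k S]
    (𝒜 : ℕ → Submodule k S)
    (hgen : ∀ i : ℕ, 𝒜 1 * 𝒜 i = 𝒜 (i + 1))
    (s₁ : ℕ) (hs₁ : s₁ = Module.finrank k (𝒜 1)) (hs₁pos : 1 ≤ s₁)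
    (d : ℕ) (hd : 2 ≤ d) (θ : S) (hθ : θ ∈ 𝒜 d) :
    ∃ M Mc : Matrix (Fin (2 ^ (s₁ - 1))) (Fin (2 ^ (s₁ - 1))) S,
      (∀ i j, ∃ e : ℕ, 1 ≤ e ∧ M i j ∈ 𝒜 e) ∧
      (∀ i j, ∃ e : ℕ, 1 ≤ e ∧ Mc i j ∈ 𝒜 e) ∧
      M * Mc = θ • (1 : Matrix (Fin (2 ^ (s₁ - 1))) (Fin (2 ^ (s₁ - 1))) S) ∧
      Mc * M = θ • (1 : Matrix (Fin (2 ^ (s₁ - 1))) (Fin (2 ^ (s₁ - 1))) S) := by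
  have : FiniteDimensional k (𝒜 1) := Module.finite_of_finrank_pos (hs₁ ▸ hs₁pos)
  obtain ⟨n, rfl⟩ : ∃ n, s₁ = n + 1 := ⟨s₁ - 1, by omega⟩
  let b := (Module.finBasis k (𝒜 1)).reindex (finCongr hs₁.symm)
  obtain ⟨y, hy, rfl⟩ :
      ∃ y : Fin (n + 1) → S, (∀ i, y i ∈ 𝒜 (d - 1)) ∧ θ = ∑ i, (b i : S) * y i :=
    Submodule.exists_eq_sum_mul_of_mem_mul b (by rwa [hgen, Nat.sub_add_cancel (by omega)])
  exact exists_isMatrixFactorization_sum_mul (P := fun r => ∃ e, 1 ≤ e ∧ r ∈ 𝒜 e)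
    ⟨1, le_rfl, zero_mem _⟩ (fun r ⟨e, he, hr⟩ => ⟨e, he, neg_mem hr⟩) n
    (fun i => ⟨1, le_rfl, (b i).2⟩) (fun i => ⟨d - 1, by omega, hy i⟩)

/-- **Matrix factorization lemma.** Let `S` be a standard graded algebra over a field `k`
with `s₁ = dim_k S₁ ≥ 1` and let `θ ∈ S_d` with `d ≥ 2`. Then there are square matrices
`M`, `M̌` of size `2^(s₁−1)` with homogeneous entries of positive degree such that
`M * M̌ = θ • 1` and `M̌ * M = θ • 1`. -/
theorem stmt_3 {k S : Type*} [Field k] [CommRing S] [Algebra k S]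
    (𝒜 : ℕ → Submodule k S) [GradedAlgebra 𝒜]
    (h0 : 𝒜 0 = (1 : Submodule k S))
    (hgen : ∀ i : ℕ, 𝒜 1 * 𝒜 i = 𝒜 (i + 1))
    (hfin : FiniteDimensional k (𝒜 1))
    (s₁ : ℕ) (hs₁ : s₁ = Module.finrank k (𝒜 1)) (hs₁pos : 1 ≤ s₁)
    (d : ℕ) (hd : 2 ≤ d) (θ : S) (hθ : θ ∈ 𝒜 d) :
    ∃ M Mc : Matrix (Fin (2 ^ (s₁ - 1))) (Fin (2 ^ (s₁ - 1))) S,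
      (∀ i j, ∃ e : ℕ, 1 ≤ e ∧ M i j ∈ 𝒜 e) ∧
      (∀ i j, ∃ e : ℕ, 1 ≤ e ∧ Mc i j ∈ 𝒜 e) ∧
      M * Mc = θ • (1 : Matrix (Fin (2 ^ (s₁ - 1))) (Fin (2 ^ (s₁ - 1))) S) ∧
      Mc * M = θ • (1 : Matrix (Fin (2 ^ (s₁ - 1))) (Fin (2 ^ (s₁ - 1))) S) :=
  stmt_3_general 𝒜 hgen s₁ hs₁ hs₁pos d hd θ hθ
end

section
/- Let S be a standard graded algebra over a field k, and let F = ⊕_{i∈ℤ} F_i and G = ⊕_{i∈ℤ} G_i be finitely generated graded free S-modules (so F_i = 0 and G_i = 0 for all sufficiently small i). Let a and b be integers, let d₂ ≥ 1 be a positive integer, and let M : F → G, M̌ : G → F, N_F : F → F, N_G : G → G be S-linear maps that are homogeneous of degrees a, b, d₂, d₂ respectively (i.e. M(F_i) ⊆ G_{i+a}, M̌(G_i) ⊆ F_{i+b}, N_F(F_i) ⊆ F_{i+d₂}, N_G(G_i) ⊆ G_{i+d₂}). Assume the commutation relations N_G ∘ M = M ∘ N_F and M̌ ∘ N_G = N_F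 ∘ M̌, and assume the exactness conditions ker(M̌ ∘ M) = im(N_F), ker(N_F) = im(M̌ ∘ M), ker(M ∘ M̌) = im(N_G), and ker(N_G) = im(M ∘ M̌). Then ker(M) = im(M̌ ∘ N_G), ker(M̌) = im(M ∘ N_F), ker(M̌ ∘ N_G) = im(M), and ker(M ∘ N_F) = im(M̌). -/
/-!
Only the first equality needs work; its mirror image is the second, and the last two follow from
the first two by diagram chasing. For the inclusion `ker M ≤ range (M̌ ∘ N_G)` it suffices to
treat homogeneous `x ∈ ker M`, since `M` is homogeneous. Exactness writes `x = N_F y` with `y`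
homogeneous, then `M y = M (M̌ z)` with `z` homogeneous, so `w := y - M̌ z ∈ ker M` has degree
`deg x - d₂` and `x = N_F w + M̌ (N_G z)`. As `d₂ ≥ 1` and the grading of `F` is bounded below,
induction on the degree puts `w` in `range (M̌ ∘ N_G)`, hence also `N_F w`, because
`N_F ∘ M̌ ∘ N_G = M̌ ∘ N_G ∘ N_G`.
-/

open LinearMap DirectSum

section Homogeneous

variable {ι k F G H φ : Type*} [Semiring k] [AddCommMonoid F] [Module k F] [AddCommMonoid G]
  [Module k G] [AddCommMonoid H] [Module k H]

def IsHomogeneousOfDegree [Add ι] (ℱ : ι → Submodule k F) (𝒢 : ι → Submodule k G) (c : ι)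
    (f : F → G) : Prop :=
  ∀ (i : ι) (x : F), x ∈ ℱ i → f x ∈ 𝒢 (i + c)

theorem IsHomogeneousOfDegree.comp [AddSemigroup ι] {ℱ : ι → Submodule k F}
    {𝒢 : ι → Submodule k G} {ℋ : ι → Submodule k H} {c c' : ι} {f : F → G} {g : G → H}
    (hg : IsHomogeneousOfDegree 𝒢 ℋ c' g) (hf : IsHomogeneousOfDegree ℱ 𝒢 c f) :
    IsHomogeneousOfDegree ℱ ℋ (c + c') (g ∘ f) := fun i x hx => by
  simpa only [Function.comp_apply, add_assoc] using hg _ _ (hf i x hx)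

variable [DecidableEq ι] [AddRightCancelSemigroup ι] {ℱ : ι → Submodule k F}
  {𝒢 : ι → Submodule k G} [Decomposition ℱ] [Decomposition 𝒢]
  [FunLike φ F G] [AddMonoidHomClass φ F G] {c : ι} {f : φ}

theorem IsHomogeneousOfDegree.decompose_map (hf : IsHomogeneousOfDegree ℱ 𝒢 c f)
    (j : ι) (x : F) : (decompose 𝒢 (f x) (j + c) : G) = f (decompose ℱ x j) := by
  induction x using Decomposition.inductionOn ℱ with
  | zero => simp
  | @homogeneous i x =>
    by_cases hij : j = i
    · subst hij
      rw [decompose_of_mem_same 𝒢 (hf j x x.2), decompose_of_mem_same ℱ x.2]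
    · rw [decompose_of_mem_ne 𝒢 (hf i x x.2) (fun h => hij (add_right_cancel h).symm),
        decompose_of_mem_ne ℱ x.2 (Ne.symm hij), map_zero]
  | add x y hx hy =>
    simp only [map_add, decompose_add, DirectSum.add_apply, Submodule.coe_add, hx, hy]

theorem IsHomogeneousOfDegree.map_decompose_eq_zero (hf : IsHomogeneousOfDegree ℱ 𝒢 c f)
    {x : F} (hx : f x = 0) (j : ι) : f (decompose ℱ x j) = 0 := by
  rw [← hf.decompose_map, hx, decompose_zero, DirectSum.zero_apply, ZeroMemClass.coe_zero]

theorem IsHomogeneousOfDegree.map_decompose_eq_of_mem (hf : IsHomogeneousOfDegree ℱ 𝒢 c f)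
    {j : ι} {y : G} (hy : y ∈ 𝒢 (j + c)) {x : F} (hx : f x = y) :
    f (decompose ℱ x j) = y := by
  rw [← hf.decompose_map, hx, decompose_of_mem_same 𝒢 hy]

end Homogeneous

section Descent

variable {k S F : Type*} [Semiring k] [Semiring S] [AddCommGroup F] [Module k F] [Module S F]
  {ℱ : ℤ → Submodule k F}

theorem homogeneous_mem_of_descent (hlb : ∃ n₀ : ℤ, ∀ j < n₀, ℱ j = ⊥) {d : ℤ} (hd : 0 < d)
    {K P : Submodule S F} {N : F →ₗ[S] F} (hNP : ∀ p ∈ P, N p ∈ P)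
    (hstep : ∀ i, ∀ x ∈ K, x ∈ ℱ i → ∃ w ∈ K, w ∈ ℱ (i - d) ∧ x - N w ∈ P) :
    ∀ i, ∀ x ∈ K, x ∈ ℱ i → x ∈ P := by
  obtain ⟨n₀, hn₀⟩ := hlb
  suffices h : ∀ n : ℕ, ∀ i < n₀ + n, ∀ x ∈ K, x ∈ ℱ i → x ∈ P from
    fun i => h ((i - n₀).toNat + 1) i (by omega)
  intro n
  induction n with
  | zero =>
    intro i hi x _ hx
    rw [hn₀ i (by omega), Submodule.mem_bot] at hx
    exact hx ▸ P.zero_mem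
  | succ n ih =>
    intro i hi x hxK hx
    obtain ⟨w, hwK, hw, hxw⟩ := hstep i x hxK hx
    simpa using P.add_mem (hNP w (ih (i - d) (by omega) w hwK hw)) hxw

variable {G : Type*} [AddCommMonoid G] [Module k G] [Module S G] {𝒢 : ℤ → Submodule k G}
  [Decomposition ℱ] [Decomposition 𝒢]

theorem ker_le_of_forall_homogeneous_mem {c : ℤ} {T : F →ₗ[S] G}
    (hT : IsHomogeneousOfDegree ℱ 𝒢 c T) {P : Submodule S F}
    (hP : ∀ i, ∀ x ∈ ker T, x ∈ ℱ i → x ∈ P) : ker T ≤ P := by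
  classical
  intro x hx
  rw [← sum_support_decompose ℱ x]
  exact P.sum_mem fun i _ => hP i _ (hT.map_decompose_eq_zero hx i) (SetLike.coe_mem _)

end Descent

section Exactness

variable {S F G : Type*} [Ring S] [AddCommGroup F] [Module S F] [AddCommGroup G] [Module S G]
  {M : F →ₗ[S] G} {Mc : G →ₗ[S] F} {NF : F →ₗ[S] F} {NG : G →ₗ[S] G}

theorem ker_comp_le_range_of_comm (hcomm : Mc ∘ₗ NG = NF ∘ₗ Mc)
    (hNF : ker NF ≤ range (Mc ∘ₗ M)) (hMc : ker Mc ≤ range M) : ker (Mc ∘ₗ NG) ≤ range M := by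
  intro x hx
  have hMcx : Mc x ∈ ker NF := by
    rw [mem_ker, ← comp_apply, ← hcomm]
    exact hx
  obtain ⟨y, hy⟩ := hNF hMcx
  obtain ⟨z, hz⟩ := hMc (show x - M y ∈ ker Mc by simp_all)
  exact ⟨z + y, by rw [map_add, hz, sub_add_cancel]⟩

variable {k : Type*} [Ring k] [Module k F] [Module k G]
  {ℱ : ℤ → Submodule k F} {𝒢 : ℤ → Submodule k G} [Decomposition ℱ] [Decomposition 𝒢]
  {a b d : ℤ}

theorem exists_homogeneous_ker_sub_mem_range (hM : IsHomogeneousOfDegree ℱ 𝒢 a M)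
    (hMc : IsHomogeneousOfDegree 𝒢 ℱ b Mc) (hNF : IsHomogeneousOfDegree ℱ ℱ d NF)
    (hcomm₁ : NG ∘ₗ M = M ∘ₗ NF) (hcomm₂ : Mc ∘ₗ NG = NF ∘ₗ Mc)
    (hex₁ : ker (Mc ∘ₗ M) ≤ range NF) (hex₄ : ker NG ≤ range (M ∘ₗ Mc))
    {i : ℤ} {x : F} (hxK : x ∈ ker M) (hx : x ∈ ℱ i) :
    ∃ w ∈ ker M, w ∈ ℱ (i - d) ∧ x - NF w ∈ range (Mc ∘ₗ NG) := by
  obtain ⟨y₀, hy₀⟩ := hex₁ (show x ∈ ker (Mc ∘ₗ M) by simp_all)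
  set y := (decompose ℱ y₀ (i - d) : F)
  have hy : y ∈ ℱ (i - d) := SetLike.coe_mem _
  have hNFy : NF y = x := hNF.map_decompose_eq_of_mem (by rwa [sub_add_cancel]) hy₀
  have hMy : M y ∈ ker NG := by
    rw [mem_ker, ← comp_apply, hcomm₁, comp_apply, hNFy]
    exact hxK
  obtain ⟨z₀, hz₀⟩ := hex₄ hMy
  set z := (decompose 𝒢 z₀ (i - d - b) : G)
  have hMMcz : M (Mc z) = M y :=
    (hM.comp hMc).map_decompose_eq_of_mem (by simpa [← add_assoc] using hM _ _ hy) hz₀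
  have hMcz : Mc z ∈ ℱ (i - d) := by simpa using hMc _ z (SetLike.coe_mem _)
  refine ⟨y - Mc z, by simp [hMMcz], sub_mem hy hMcz, z, ?_⟩
  rw [map_sub, hNFy, sub_sub_cancel, comp_apply, ← comp_apply, hcomm₂, comp_apply]

theorem ker_le_range_comp_of_graded (hlb : ∃ n₀ : ℤ, ∀ j < n₀, ℱ j = ⊥) (hd : 0 < d)
    (hM : IsHomogeneousOfDegree ℱ 𝒢 a M) (hMc : IsHomogeneousOfDegree 𝒢 ℱ b Mc)
    (hNF : IsHomogeneousOfDegree ℱ ℱ d NF)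
    (hcomm₁ : NG ∘ₗ M = M ∘ₗ NF) (hcomm₂ : Mc ∘ₗ NG = NF ∘ₗ Mc)
    (hex₁ : ker (Mc ∘ₗ M) ≤ range NF) (hex₄ : ker NG ≤ range (M ∘ₗ Mc)) :
    ker M ≤ range (Mc ∘ₗ NG) := by
  have hNF_range : ∀ p ∈ range (Mc ∘ₗ NG), NF p ∈ range (Mc ∘ₗ NG) := by
    rintro _ ⟨v, rfl⟩
    exact ⟨NG v, LinearMap.congr_fun hcomm₂ (NG v)⟩
  exact ker_le_of_forall_homogeneous_mem hM <| homogeneous_mem_of_descent hlb hd hNF_range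
    fun _ _ hxK hx => exists_homogeneous_ker_sub_mem_range hM hMc hNF hcomm₁ hcomm₂ hex₁ hex₄ hxK hx

end Exactness

theorem stmt_4_general {k S : Type*} [Field k] [CommRing S]
    {F G : Type*} [AddCommGroup F] [Module S F] [AddCommGroup G] [Module S G]
    [Module k F] [Module k G]
    -- gradings
    (ℱ : ℤ → Submodule k F) (𝒢 : ℤ → Submodule k G)
    [DirectSum.Decomposition ℱ] [DirectSum.Decomposition 𝒢]
    -- components vanish in small degrees
    (hFlb : ∃ n₀ : ℤ, ∀ j : ℤ, j < n₀ → ℱ j = ⊥)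
    (hGlb : ∃ n₀ : ℤ, ∀ j : ℤ, j < n₀ → 𝒢 j = ⊥)
    -- the homogeneous maps
    (a b d₂ : ℤ) (hd₂ : 1 ≤ d₂)
    (M : F →ₗ[S] G) (Mc : G →ₗ[S] F) (NF : F →ₗ[S] F) (NG : G →ₗ[S] G)
    (hM : ∀ (i : ℤ) (x : F), x ∈ ℱ i → M x ∈ 𝒢 (i + a))
    (hMc : ∀ (i : ℤ) (x : G), x ∈ 𝒢 i → Mc x ∈ ℱ (i + b))
    (hNF : ∀ (i : ℤ) (x : F), x ∈ ℱ i → NF x ∈ ℱ (i + d₂))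
    (hNG : ∀ (i : ℤ) (x : G), x ∈ 𝒢 i → NG x ∈ 𝒢 (i + d₂))
    -- commutation relations
    (hcomm₁ : NG ∘ₗ M = M ∘ₗ NF) (hcomm₂ : Mc ∘ₗ NG = NF ∘ₗ Mc)
    -- exactness conditions
    (hex₁ : LinearMap.ker (Mc ∘ₗ M) = LinearMap.range NF)
    (hex₂ : LinearMap.ker NF = LinearMap.range (Mc ∘ₗ M))
    (hex₃ : LinearMap.ker (M ∘ₗ Mc) = LinearMap.range NG)
    (hex₄ : LinearMap.ker NG = LinearMap.range (M ∘ₗ Mc)) :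
    LinearMap.ker M = LinearMap.range (Mc ∘ₗ NG) ∧
    LinearMap.ker Mc = LinearMap.range (M ∘ₗ NF) ∧
    LinearMap.ker (Mc ∘ₗ NG) = LinearMap.range M ∧
    LinearMap.ker (M ∘ₗ NF) = LinearMap.range Mc := by
  have hker_M : ker M = range (Mc ∘ₗ NG) :=
    le_antisymm (ker_le_range_comp_of_graded hFlb hd₂ hM hMc hNF hcomm₁ hcomm₂ hex₁.le hex₄.le)
      (range_le_ker_iff.2 (by rw [← comp_assoc]; exact range_le_ker_iff.1 hex₃.ge))
  have hker_Mc : ker Mc = range (M ∘ₗ NF) :=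
    le_antisymm
      (ker_le_range_comp_of_graded hGlb hd₂ hMc hM hNG hcomm₂.symm hcomm₁.symm hex₃.le hex₂.le)
      (range_le_ker_iff.2 (by rw [← comp_assoc]; exact range_le_ker_iff.1 hex₁.ge))
  refine ⟨hker_M, hker_Mc, le_antisymm ?_ ?_, le_antisymm ?_ ?_⟩
  · exact ker_comp_le_range_of_comm hcomm₂ hex₂.le (hker_Mc.trans_le (range_comp_le_range _ _))
  · rw [range_le_ker_iff, comp_assoc, hcomm₁, ← comp_assoc]
    exact range_le_ker_iff.1 hex₁.ge
  · exact ker_comp_le_range_of_comm hcomm₁.symm hex₄.le (hker_M.trans_le (range_comp_le_range _ _))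
  · rw [range_le_ker_iff, comp_assoc, ← hcomm₂, ← comp_assoc]
    exact range_le_ker_iff.1 hex₃.ge

/-- **Lemma 2 of Kustin–Striuli–Vraciu.** Given homogeneous maps `M`, `M̌`, `N_F`, `N_G`
between finitely generated graded free modules over a standard graded algebra, satisfying
the stated commutation and exactness conditions, the kernels and images interchange as
stated. -/
theorem stmt_4 {k S : Type*} [Field k] [CommRing S] [Algebra k S]
    (𝒜 : ℕ → Submodule k S) [GradedAlgebra 𝒜]
    -- standard graded
    (h0 : 𝒜 0 = (1 : Submodule k S))
    (hgen : ∀ i : ℕ, 𝒜 1 * 𝒜 i = 𝒜 (i + 1))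
    (hfin : FiniteDimensional k (𝒜 1))
    {F G : Type*} [AddCommGroup F] [Module S F] [AddCommGroup G] [Module S G]
    [Module k F] [IsScalarTower k S F] [Module k G] [IsScalarTower k S G]
    -- finitely generated free modules
    [Module.Free S F] [Module.Finite S F] [Module.Free S G] [Module.Finite S G]
    -- gradings
    (ℱ : ℤ → Submodule k F) (𝒢 : ℤ → Submodule k G)
    [DirectSum.Decomposition ℱ] [DirectSum.Decomposition 𝒢]
    (hsmulF : ∀ (i : ℕ) (j : ℤ) (s : S) (x : F), s ∈ 𝒜 i → x ∈ ℱ j → s • x ∈ ℱ (j + i))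
    (hsmulG : ∀ (i : ℕ) (j : ℤ) (s : S) (x : G), s ∈ 𝒜 i → x ∈ 𝒢 j → s • x ∈ 𝒢 (j + i))
    -- components vanish in small degrees
    (hFlb : ∃ n₀ : ℤ, ∀ j : ℤ, j < n₀ → ℱ j = ⊥)
    (hGlb : ∃ n₀ : ℤ, ∀ j : ℤ, j < n₀ → 𝒢 j = ⊥)
    -- the homogeneous maps
    (a b d₂ : ℤ) (hd₂ : 1 ≤ d₂)
    (M : F →ₗ[S] G) (Mc : G →ₗ[S] F) (NF : F →ₗ[S] F) (NG : G →ₗ[S] G)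
    (hM : ∀ (i : ℤ) (x : F), x ∈ ℱ i → M x ∈ 𝒢 (i + a))
    (hMc : ∀ (i : ℤ) (x : G), x ∈ 𝒢 i → Mc x ∈ ℱ (i + b))
    (hNF : ∀ (i : ℤ) (x : F), x ∈ ℱ i → NF x ∈ ℱ (i + d₂))
    (hNG : ∀ (i : ℤ) (x : G), x ∈ 𝒢 i → NG x ∈ 𝒢 (i + d₂))
    -- commutation relations
    (hcomm₁ : NG ∘ₗ M = M ∘ₗ NF) (hcomm₂ : Mc ∘ₗ NG = NF ∘ₗ Mc)
    -- exactness conditions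
    (hex₁ : LinearMap.ker (Mc ∘ₗ M) = LinearMap.range NF)
    (hex₂ : LinearMap.ker NF = LinearMap.range (Mc ∘ₗ M))
    (hex₃ : LinearMap.ker (M ∘ₗ Mc) = LinearMap.range NG)
    (hex₄ : LinearMap.ker NG = LinearMap.range (M ∘ₗ Mc)) :
    LinearMap.ker M = LinearMap.range (Mc ∘ₗ NG) ∧
    LinearMap.ker Mc = LinearMap.range (M ∘ₗ NF) ∧
    LinearMap.ker (Mc ∘ₗ NG) = LinearMap.range M ∧
    LinearMap.ker (M ∘ₗ NF) = LinearMap.range Mc :=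
  stmt_4_general ℱ 𝒢 hFlb hGlb a b d₂ hd₂ M Mc NF NG hM hMc hNF hNG hcomm₁ hcomm₂ hex₁ hex₂ hex₃
    hex₄
end

section
/- Let S be a standard graded Artinian algebra over a field k, and let (F_j, f_j)_{j∈ℤ} be a complex of finitely generated graded free S-modules (with differentials f_j : F_j → F_{j−1} satisfying f_{j−1} ∘ f_j = 0), where each f_j is homogeneous of degree 0 and minimal, meaning im(f_j) ⊆ S₊ · F_{j−1}. Assume the complex is exact and that the dual complex obtained by applying Hom_S(−, S) is also exact (i.e. the complex is totally acyclic). Then for every integer N, the degree-N component [F_j]_N is nonzero for only finitely many j ∈ ℤ, and Σ_{j∈ℤ} (−1)^j dim_k [F_j]_N = 0. -/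
/-!
Exactness and minimality push the lowest degree of `F_j` up as `j` grows: if `F_j` lives in
degrees `≥ n`, then `S₊F_j` lives in degrees `≥ n + 1`, so `f_j` kills the pieces of `F_{j+1}`
of degree `≤ n`; by exactness these lie in `im f_{j+1} ⊆ S₊F_{j+1}`, and the lowest one of them
must vanish. The same argument on the exact dual complex `Hom_S(F, S)`, run on homogeneous
functionals, pushes the lowest degree of `Hom_S(F_j, S)` up as `j` decreases. Since `F_j` is
free, a nonzero `x ∈ [F_j]_N` is detected by a functional, whose value must land in a nonzero
`S_c` with `c` below the Artinian bound; so `[F_j]_N = 0` for `j ≪ 0` as well. The degree-`N`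
strand is then a bounded exact sequence of finite-dimensional vector spaces, whose Euler
characteristic vanishes.
-/

open DirectSum HomogeneousIdeal

theorem Int.forall_lt_induction {P : ℤ → Prop} {b n : ℤ} (hb : ∀ m < b, P m)
    (step : ∀ m < n, (∀ m' < m, P m') → P m) : ∀ m < n, P m := by
  intro m
  induction m using Int.strongRec (m := b) with
  | lt m hm => exact fun _ => hb m hm
  | ge m _ ih => exact fun hm => step m hm fun m' hm' => ih m' hm' (hm'.trans hm)

theorem Finset.sum_sub_pred_eq_zero {G : Type*} [AddCommGroup G] {a : ℤ → G} {s : Finset ℤ}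
    (h : ∀ j, a j ≠ 0 → j ∈ s ∧ j + 1 ∈ s) : ∑ j ∈ s, (a j - a (j - 1)) = 0 := by
  rw [sum_sub_distrib, sub_eq_zero,
    ← finsum_eq_sum_of_support_subset a fun j hj => (h j hj).1,
    ← finsum_eq_sum_of_support_subset (fun j => a (j - 1)) fun j hj => by
      simpa using (h _ hj).2]
  exact (finsum_comp_equiv (Equiv.subRight 1)).symm

theorem sum_negOnePow_finrank_eq_zero {k : Type*} [Field k] {V : ℤ → Type*}
    [∀ j, AddCommGroup (V j)] [∀ j, Module k (V j)] [∀ j, FiniteDimensional k (V j)]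
    (φ : ∀ j, V (j + 1) →ₗ[k] V j)
    (hexact : ∀ j, LinearMap.ker (φ j) = LinearMap.range (φ (j + 1)))
    {J : Finset ℤ} (hJ : ∀ j ∉ J, Module.finrank k (V j) = 0) :
    ∑ j ∈ J, ((Int.negOnePow j : ℤ) * (Module.finrank k (V j) : ℤ)) = 0 := by
  let r : ℤ → ℕ := fun j => Module.finrank k (LinearMap.range (φ j))
  have hdim : ∀ j, Module.finrank k (V (j + 1)) = r j + r (j + 1) := fun j => by
    rw [← (φ j).finrank_range_add_finrank_ker, hexact]
  have hr : ∀ j, r j ≠ 0 → j ∈ J ∧ j + 1 ∈ J := fun j hj => by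
    constructor <;> by_contra hJj <;> apply hj
    · exact Nat.eq_zero_of_le_zero (hJ j hJj ▸ Submodule.finrank_le _)
    · exact Nat.eq_zero_of_le_zero (hJ _ hJj ▸ LinearMap.finrank_range_le _)
  calc ∑ j ∈ J, ((Int.negOnePow j : ℤ) * (Module.finrank k (V j) : ℤ))
      = ∑ j ∈ J, ((Int.negOnePow j : ℤ) * r j - (Int.negOnePow (j - 1) : ℤ) * r (j - 1)) := by
        refine Finset.sum_congr rfl fun j _ => ?_
        obtain ⟨i, rfl⟩ : ∃ i, j = i + 1 := ⟨j - 1, by ring⟩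
        rw [hdim, add_sub_cancel_right, Int.negOnePow_succ]
        push_cast
        ring
    _ = 0 := Finset.sum_sub_pred_eq_zero fun j hj => hr j fun h => hj (by simp [h])

namespace GradedAlgebra

variable {k S : Type*} [CommRing k] [CommRing S] [Algebra k S]

theorem fg_of_generated_in_degree_one {𝒜 : ℕ → Submodule k S} (h0 : 𝒜 0 = 1)
    (hgen : ∀ i, 𝒜 1 * 𝒜 i = 𝒜 (i + 1)) (h1 : (𝒜 1).FG) (i : ℕ) : (𝒜 i).FG := by
  induction i with
  | zero => rw [h0, Submodule.one_eq_span]; exact Submodule.fg_span_singleton 1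
  | succ i ih => rw [← hgen i]; exact h1.mul ih

variable (𝒜 : ℕ → Submodule k S) [GradedAlgebra 𝒜]

theorem moduleFinite_of_eventually_eq_bot (hfg : ∀ i, (𝒜 i).FG) {N : ℕ}
    (hN : ∀ i, N ≤ i → 𝒜 i = ⊥) : Module.Finite k S := by
  have htop : (⊤ : Submodule k S) = ⨆ i ∈ Finset.range N, 𝒜 i := by
    refine (top_le_iff.mp ?_).symm
    rw [← (Decomposition.isInternal 𝒜).submodule_iSup_eq_top]
    refine iSup_le fun i => ?_
    by_cases hi : i < N
    · exact le_biSup 𝒜 (Finset.mem_range.mpr hi)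
    · simp [hN i (not_lt.mp hi)]
  exact ⟨htop ▸ Submodule.fg_biSup _ _ fun i _ => hfg i⟩

/-- The projection onto `S_z`, extended by zero to negative `z`: homogeneous functionals on a
`ℤ`-graded module may have negative degree. -/
noncomputable def intProj (z : ℤ) : S →ₗ[k] S := if 0 ≤ z then proj 𝒜 z.toNat else 0

variable {𝒜}

theorem intProj_natCast (c : ℕ) (s : S) : intProj 𝒜 c s = decompose 𝒜 s c := by
  simp [intProj, proj_apply]

theorem intProj_of_neg {z : ℤ} (hz : z < 0) (s : S) : intProj 𝒜 z s = 0 := by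
  simp [intProj, not_le.mpr hz]

theorem intProj_intProj (z : ℤ) (s : S) : intProj 𝒜 z (intProj 𝒜 z s) = intProj 𝒜 z s := by
  rcases lt_or_ge z 0 with hz | hz
  · simp [intProj_of_neg hz]
  · lift z to ℕ using hz
    simp only [intProj_natCast]
    exact decompose_of_mem_same 𝒜 (decompose 𝒜 s z).2

theorem intProj_mul_of_mem {i : ℕ} {s : S} (hs : s ∈ 𝒜 i) (t : S) (z : ℤ) :
    intProj 𝒜 z (s * t) = s * intProj 𝒜 (z - i) t := by
  rcases lt_or_ge z i with hz | hz
  · rw [intProj_of_neg (show z - i < 0 by omega) t, mul_zero]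
    rcases lt_or_ge z 0 with hz0 | hz0
    · exact intProj_of_neg hz0 _
    · lift z to ℕ using hz0
      rw [intProj_natCast, coe_decompose_mul_of_left_mem_of_not_le 𝒜 hs (by omega)]
  · lift z to ℕ using (by omega)
    rw [intProj_natCast, coe_decompose_mul_of_left_mem_of_le 𝒜 hs (by omega),
      show (z : ℤ) - i = ((z - i : ℕ) : ℤ) by omega, intProj_natCast]

variable (𝒜)

noncomputable def degreeGE (n : ℤ) : Submodule k S :=
  ⨅ (c : ℤ) (_ : c < n), LinearMap.ker (intProj 𝒜 c)

variable {𝒜}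

theorem mem_degreeGE {n : ℤ} {s : S} : s ∈ degreeGE 𝒜 n ↔ ∀ c < n, intProj 𝒜 c s = 0 := by
  simp [degreeGE]

theorem mul_mem_degreeGE {s t : S} (hs : s ∈ 𝒜₊) {n : ℤ} (ht : t ∈ degreeGE 𝒜 n) :
    s * t ∈ degreeGE 𝒜 (n + 1) := by
  classical
  rw [mem_degreeGE] at ht ⊢
  intro c hc
  rw [← sum_support_decompose 𝒜 s, Finset.sum_mul, map_sum]
  refine Finset.sum_eq_zero fun i _ => ?_
  rw [intProj_mul_of_mem (decompose 𝒜 s i).2]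
  rcases Nat.eq_zero_or_pos i with rfl | hi
  · rw [← GradedRing.proj_apply, (mem_irrelevant_iff 𝒜 s).mp hs, zero_mul]
  · rw [ht _ (by omega), mul_zero]

theorem eq_zero_of_mem_degreeGE {n : ℤ} (hn : ∀ i : ℕ, n ≤ i → 𝒜 i = ⊥) {s : S}
    (hs : s ∈ degreeGE 𝒜 n) : s = 0 := by
  classical
  rw [← sum_support_decompose 𝒜 s]
  refine Finset.sum_eq_zero fun c _ => ?_
  rcases lt_or_ge (c : ℤ) n with hc | hc
  · rw [← intProj_natCast]
    exact mem_degreeGE.mp hs c hc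
  · simpa [hn c hc] using (decompose 𝒜 s c).2

end GradedAlgebra

theorem Submodule.apply_mem_of_mem_smul_top {S M : Type*} [CommRing S] [AddCommGroup M]
    [Module S M] {I : Ideal S} (g : M →ₗ[S] S) {z : M} (hz : z ∈ I • (⊤ : Submodule S M)) :
    g z ∈ I :=
  (smul_le.mpr fun r hr n _ => by simpa using I.mul_mem_right (g n) hr :
    I • (⊤ : Submodule S M) ≤ comap g I) hz

namespace MinimalComplex

open GradedAlgebra

variable {k S : Type*} [CommRing k] [CommRing S] [Algebra k S]

section Grading

variable {M : Type*} [AddCommGroup M] [Module k M] (ℳ : ℤ → Submodule k M) [Decomposition ℳ]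

def VanishesBelow (n : ℤ) : Prop := ∀ m < n, ℳ m = ⊥

theorem exists_vanishesBelow [IsNoetherian k M] : ∃ b, VanishesBelow ℳ b := by
  obtain ⟨b, hb⟩ := (WellFoundedGT.finite_ne_bot_of_iSupIndep
    (Decomposition.isInternal ℳ).submodule_iSupIndep).bddBelow
  exact ⟨b, fun m hm => not_not.mp fun hne => (hb hne).not_gt hm⟩

theorem exists_forall_gt_eq_bot [IsNoetherian k M] : ∃ B, ∀ e > B, ℳ e = ⊥ := by
  obtain ⟨B, hB⟩ := (WellFoundedGT.finite_ne_bot_of_iSupIndep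
    (Decomposition.isInternal ℳ).submodule_iSupIndep).bddAbove
  exact ⟨B, fun e he => not_not.mp fun hne => (hB hne).not_gt he⟩

variable {ℳ} {M' : Type*} [AddCommGroup M'] [Module k M'] {ℳ' : ℤ → Submodule k M'}

theorem linearMap_ext_of_homogeneous {R N : Type*} [Semiring R] [Module R M] [AddCommGroup N]
    [Module R N] {g g' : M →ₗ[R] N} (H : ∀ e, ∀ x ∈ ℳ e, g x = g' x) : g = g' := by
  ext x
  induction x using Decomposition.inductionOn ℳ with
  | zero => simp
  | homogeneous y => exact H _ _ y.2
  | add y z hy hz => rw [map_add, map_add, hy, hz]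

theorem decompose_map_of_degree_zero [Decomposition ℳ'] {f : M →ₗ[k] M'}
    (hf : ∀ n, ∀ x ∈ ℳ n, f x ∈ ℳ' n) (x : M) (n : ℤ) :
    (decompose ℳ' (f x) n : M') = f (decompose ℳ x n) := by
  induction x using Decomposition.inductionOn ℳ with
  | zero => simp
  | @homogeneous e y =>
    by_cases he : e = n
    · subst he
      rw [decompose_of_mem_same ℳ' (hf _ _ y.2), decompose_of_mem_same ℳ y.2]
    · rw [decompose_of_mem_ne ℳ' (hf _ _ y.2) he, decompose_of_mem_ne ℳ y.2 he, map_zero]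
  | add y z hy hz =>
    simp only [map_add, decompose_add, DirectSum.add_apply, Submodule.coe_add, hy, hz]

theorem ker_restrict_eq_range_restrict {M'' : Type*} [AddCommGroup M''] [Module k M'']
    {ℳ'' : ℤ → Submodule k M''} [Decomposition ℳ''] {f : M →ₗ[k] M'} {g : M'' →ₗ[k] M}
    (hf : ∀ n, ∀ x ∈ ℳ n, f x ∈ ℳ' n) (hg : ∀ n, ∀ x ∈ ℳ'' n, g x ∈ ℳ n)
    (hexact : LinearMap.ker f = LinearMap.range g) (n : ℤ) :
    LinearMap.ker (f.restrict (hf n)) = LinearMap.range (g.restrict (hg n)) := by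
  ext x
  constructor
  · intro hx
    obtain ⟨y, hy⟩ : (x : M) ∈ LinearMap.range g :=
      hexact ▸ LinearMap.mem_ker.mpr (congrArg Subtype.val (LinearMap.mem_ker.mp hx))
    refine ⟨⟨decompose ℳ'' y n, (decompose ℳ'' y n).2⟩, Subtype.ext ?_⟩
    simp only [LinearMap.coe_restrict_apply]
    rw [← decompose_map_of_degree_zero hg, hy, decompose_of_mem_same ℳ x.2]
  · rintro ⟨y, rfl⟩
    have hgy : g y ∈ LinearMap.ker f := hexact ▸ LinearMap.mem_range_self g y
    exact LinearMap.mem_ker.mpr (Subtype.ext hgy)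

end Grading

variable {𝒜 : ℕ → Submodule k S}
variable {M : Type*} [AddCommGroup M] [Module S M] [Module k M] {ℳ : ℤ → Submodule k M}
  [Decomposition ℳ]

variable (𝒜 ℳ) in
def IsGradedModule : Prop :=
  ∀ (i : ℕ) (n : ℤ) (s : S) (x : M), s ∈ 𝒜 i → x ∈ ℳ n → s • x ∈ ℳ (n + i)

theorem decompose_smul_of_mem (h : IsGradedModule 𝒜 ℳ) {i : ℕ} {s : S} (hs : s ∈ 𝒜 i)
    (x : M) (m : ℤ) : (decompose ℳ (s • x) m : M) = s • (decompose ℳ x (m - i) : M) := by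
  induction x using Decomposition.inductionOn ℳ with
  | zero => simp
  | @homogeneous n y =>
    have hsy : s • (y : M) ∈ ℳ (n + i) := h i n s y hs y.2
    by_cases hm : m = n + i
    · subst hm
      rw [decompose_of_mem_same ℳ hsy, add_sub_cancel_right, decompose_of_mem_same ℳ y.2]
    · rw [decompose_of_mem_ne ℳ hsy (Ne.symm hm), decompose_of_mem_ne ℳ y.2 (by omega),
        smul_zero]
  | add y z hy hz =>
    simp only [smul_add, decompose_add, DirectSum.add_apply, Submodule.coe_add, hy, hz]

variable [GradedAlgebra 𝒜]

theorem eq_zero_of_mem_irrelevant_smul (h : IsGradedModule 𝒜 ℳ) {m : ℤ}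
    (hm : VanishesBelow ℳ m) {x : M} (hx : x ∈ ℳ m)
    (hx' : x ∈ 𝒜₊.toIdeal • (⊤ : Submodule S M)) : x = 0 := by
  classical
  rw [← decompose_of_mem_same ℳ hx]
  refine Submodule.smul_induction_on hx' (fun s hs y _ => ?_) fun y z hy hz => ?_
  · rw [← sum_support_decompose 𝒜 s, Finset.sum_smul, decompose_sum, DFinsupp.finsetSum_apply,
      AddSubmonoidClass.coe_finsetSum]
    refine Finset.sum_eq_zero fun i _ => ?_
    rw [decompose_smul_of_mem h (decompose 𝒜 s i).2]
    rcases Nat.eq_zero_or_pos i with rfl | hi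
    · rw [← GradedRing.proj_apply, (mem_irrelevant_iff 𝒜 s).mp hs, zero_smul]
    · rw [(Submodule.eq_bot_iff _).mp (hm _ (by omega)) _ (decompose ℳ y (m - i)).2, smul_zero]
  · rw [decompose_add, DirectSum.add_apply, Submodule.coe_add, hy, hz, add_zero]

theorem VanishesBelow.succ_of_exact {M₀ M₂ : Type*} [AddCommGroup M₀] [Module S M₀]
    [Module k M₀] [AddCommGroup M₂] [Module S M₂] {ℳ₀ : ℤ → Submodule k M₀} [Decomposition ℳ₀]
    (h₀ : IsGradedModule 𝒜 ℳ₀) (h : IsGradedModule 𝒜 ℳ) {f₁ : M →ₗ[S] M₀} {f₂ : M₂ →ₗ[S] M}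
    (hf₁ : ∀ n, ∀ x ∈ ℳ n, f₁ x ∈ ℳ₀ n)
    (hmin₁ : ∀ x, f₁ x ∈ 𝒜₊.toIdeal • (⊤ : Submodule S M₀))
    (hmin₂ : ∀ x, f₂ x ∈ 𝒜₊.toIdeal • (⊤ : Submodule S M))
    (hexact : LinearMap.ker f₁ = LinearMap.range f₂) (hbdd : ∃ b, VanishesBelow ℳ b) {n : ℤ}
    (hn : VanishesBelow ℳ₀ n) : VanishesBelow ℳ (n + 1) := by
  obtain ⟨b, hb⟩ := hbdd
  refine Int.forall_lt_induction hb fun m hm ih => (Submodule.eq_bot_iff _).mpr fun x hx => ?_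
  have hfx : f₁ x = 0 :=
    eq_zero_of_mem_irrelevant_smul h₀ (fun m' hm' => hn m' (by omega)) (hf₁ m x hx) (hmin₁ x)
  obtain ⟨y, rfl⟩ : x ∈ LinearMap.range f₂ := hexact ▸ hfx
  exact eq_zero_of_mem_irrelevant_smul h ih hx (hmin₂ y)

variable [IsScalarTower k S M]

variable (𝒜 ℳ) in
noncomputable def dualPieceLinear (d : ℤ) (φ : M →ₗ[S] S) : M →ₗ[k] S :=
  toModule k ℤ S (fun e => intProj 𝒜 (d + e) ∘ₗ φ.restrictScalars k ∘ₗ (ℳ e).subtype) ∘ₗ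
    (decomposeLinearEquiv ℳ).toLinearMap

theorem dualPieceLinear_apply_of_mem (d : ℤ) (φ : M →ₗ[S] S) {e : ℤ} {x : M} (hx : x ∈ ℳ e) :
    dualPieceLinear 𝒜 ℳ d φ x = intProj 𝒜 (d + e) (φ x) := by
  simp only [dualPieceLinear, LinearMap.coe_comp, Function.comp_apply, LinearEquiv.coe_coe,
    decomposeLinearEquiv_apply, decompose_of_mem ℳ hx, ← lof_eq_of k, toModule_lof]
  rfl

theorem dualPieceLinear_smul (h : IsGradedModule 𝒜 ℳ) (d : ℤ) (φ : M →ₗ[S] S) (s : S)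
    (x : M) : dualPieceLinear 𝒜 ℳ d φ (s • x) = s • dualPieceLinear 𝒜 ℳ d φ x := by
  classical
  induction x using Decomposition.inductionOn ℳ with
  | zero => rw [smul_zero, map_zero, smul_zero]
  | @homogeneous e y =>
    rw [← sum_support_decompose 𝒜 s, Finset.sum_smul, map_sum, Finset.sum_smul]
    refine Finset.sum_congr rfl fun i _ => ?_
    have hs := (decompose 𝒜 s i).2
    rw [dualPieceLinear_apply_of_mem d φ (h i e _ y hs y.2), dualPieceLinear_apply_of_mem d φ y.2,
      map_smul, smul_eq_mul, intProj_mul_of_mem hs, show d + (e + (i : ℤ)) - i = d + e by ring,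
      smul_eq_mul]
  | add y z hy hz => rw [smul_add, map_add, hy, hz, map_add, smul_add]

noncomputable def dualPiece (h : IsGradedModule 𝒜 ℳ) (d : ℤ) (φ : M →ₗ[S] S) : M →ₗ[S] S :=
  { toFun := dualPieceLinear 𝒜 ℳ d φ
    map_add' := map_add _
    map_smul' := dualPieceLinear_smul h d φ }

variable {h : IsGradedModule 𝒜 ℳ}

theorem dualPiece_apply_of_mem (d : ℤ) (φ : M →ₗ[S] S) {e : ℤ} {x : M} (hx : x ∈ ℳ e) :
    dualPiece h d φ x = intProj 𝒜 (d + e) (φ x) := by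
  rw [← dualPieceLinear_apply_of_mem d φ hx]
  rfl

theorem dualPiece_dualPiece (d : ℤ) (φ : M →ₗ[S] S) :
    dualPiece h d (dualPiece h d φ) = dualPiece h d φ :=
  linearMap_ext_of_homogeneous fun _ _ hx => by
    rw [dualPiece_apply_of_mem d _ hx, dualPiece_apply_of_mem d _ hx, intProj_intProj]

theorem dualPiece_comp {M' : Type*} [AddCommGroup M'] [Module S M'] [Module k M']
    [IsScalarTower k S M'] {ℳ' : ℤ → Submodule k M'} [Decomposition ℳ']
    {h' : IsGradedModule 𝒜 ℳ'} {f : M' →ₗ[S] M} (hf : ∀ n, ∀ x ∈ ℳ' n, f x ∈ ℳ n) (d : ℤ)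
    (φ : M →ₗ[S] S) : dualPiece h d φ ∘ₗ f = dualPiece h' d (φ ∘ₗ f) :=
  linearMap_ext_of_homogeneous fun e x hx => by
    rw [LinearMap.comp_apply, dualPiece_apply_of_mem d _ (hf e x hx),
      dualPiece_apply_of_mem d _ hx, LinearMap.comp_apply]

variable (h) in
def DualVanishesBelow (n : ℤ) : Prop := ∀ d < n, ∀ φ : M →ₗ[S] S, dualPiece h d φ = 0

theorem DualVanishesBelow.map_mem_degreeGE {n : ℤ} (hM : DualVanishesBelow h n)
    (φ : M →ₗ[S] S) {e : ℤ} {x : M} (hx : x ∈ ℳ e) : φ x ∈ degreeGE 𝒜 (n + e) :=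
  mem_degreeGE.mpr fun c hc => by
    simpa [dualPiece_apply_of_mem _ φ hx] using
      LinearMap.congr_fun (hM (c - e) (by omega) φ) x

theorem exists_dualVanishesBelow [IsNoetherian k M] : ∃ b, DualVanishesBelow h b := by
  obtain ⟨B, hB⟩ := exists_forall_gt_eq_bot ℳ
  refine ⟨-B, fun d hd φ => linearMap_ext_of_homogeneous (ℳ := ℳ) fun e x hx => ?_⟩
  rcases le_or_gt e B with he | he
  · rw [dualPiece_apply_of_mem d φ hx, intProj_of_neg (by omega), LinearMap.zero_apply]
  · rw [(Submodule.eq_bot_iff _).mp (hB e he) x hx, map_zero, map_zero]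

theorem DualVanishesBelow.dualPiece_eq_zero [Module.Free S M] [Module.Finite S M] {d : ℤ}
    (hM : DualVanishesBelow h d) {ψ : M →ₗ[S] S} (hψ : ∀ x, ψ x ∈ 𝒜₊) :
    dualPiece h d ψ = 0 :=
  linearMap_ext_of_homogeneous fun e x hx => by
    -- `ψ = ∑ ψ(bᵢ) • bᵢ*` with `ψ(bᵢ) ∈ S₊`, and every `bᵢ*` maps `ℳ e` into `S_{≥ d + e}`.
    let b := Module.Free.chooseBasis S M
    have hψx : ψ x ∈ degreeGE 𝒜 (d + e + 1) := by
      rw [← b.sum_dual_apply_smul_coord ψ, LinearMap.sum_apply]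
      exact Submodule.sum_mem _ fun i _ =>
        mul_mem_degreeGE (hψ (b i)) (hM.map_mem_degreeGE (b.coord i) hx)
    rw [dualPiece_apply_of_mem d ψ hx, mem_degreeGE.mp hψx _ (by omega), LinearMap.zero_apply]

theorem DualVanishesBelow.eq_bot [Module.Free S M] {d e : ℤ} (hM : DualVanishesBelow h d)
    (hS : ∀ i : ℕ, d + e ≤ i → 𝒜 i = ⊥) : ℳ e = ⊥ :=
  (Submodule.eq_bot_iff _).mpr fun x hx => (Module.forall_dual_apply_eq_zero_iff S x).mp
    fun φ => eq_zero_of_mem_degreeGE hS (hM.map_mem_degreeGE φ hx)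

theorem DualVanishesBelow.succ_of_dualExact {M₀ M₂ : Type*} [AddCommGroup M₀] [Module S M₀]
    [AddCommGroup M₂] [Module S M₂] [Module k M₂] [IsScalarTower k S M₂]
    [Module.Free S M] [Module.Finite S M] [Module.Free S M₂] [Module.Finite S M₂]
    {ℳ₂ : ℤ → Submodule k M₂} [Decomposition ℳ₂] {h₂ : IsGradedModule 𝒜 ℳ₂}
    {f₁ : M →ₗ[S] M₀} {f₂ : M₂ →ₗ[S] M} (hf₂ : ∀ n, ∀ x ∈ ℳ₂ n, f₂ x ∈ ℳ n)
    (hmin₁ : ∀ x, f₁ x ∈ 𝒜₊.toIdeal • (⊤ : Submodule S M₀))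
    (hmin₂ : ∀ x, f₂ x ∈ 𝒜₊.toIdeal • (⊤ : Submodule S M))
    (hdual : ∀ g : M →ₗ[S] S, g ∘ₗ f₂ = 0 ↔ ∃ g₀ : M₀ →ₗ[S] S, g = g₀ ∘ₗ f₁)
    (hbdd : ∃ b, DualVanishesBelow h b) {n : ℤ} (hn : DualVanishesBelow h₂ n) :
    DualVanishesBelow h (n + 1) := by
  obtain ⟨b, hb⟩ := hbdd
  refine Int.forall_lt_induction hb fun d hd ih φ => ?_
  have hcomp : dualPiece h d φ ∘ₗ f₂ = 0 := by
    rw [dualPiece_comp hf₂]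
    exact DualVanishesBelow.dualPiece_eq_zero (fun d' hd' => hn d' (by omega)) fun y =>
      Submodule.apply_mem_of_mem_smul_top φ (hmin₂ y)
  obtain ⟨g₀, hg₀⟩ := (hdual _).mp hcomp
  rw [← dualPiece_dualPiece]
  exact DualVanishesBelow.dualPiece_eq_zero ih fun x => hg₀ ▸
    Submodule.apply_mem_of_mem_smul_top g₀ (hmin₁ x)

end MinimalComplex

open MinimalComplex GradedAlgebra

theorem stmt_5_general {k S : Type*} [Field k] [CommRing S] [Algebra k S]
    (𝒜 : ℕ → Submodule k S) [GradedAlgebra 𝒜]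
    -- standard graded Artinian
    (h0 : 𝒜 0 = (1 : Submodule k S))
    (hgen : ∀ i : ℕ, 𝒜 1 * 𝒜 i = 𝒜 (i + 1))
    (hfin : FiniteDimensional k (𝒜 1))
    (hart : ∃ N : ℕ, ∀ i : ℕ, N ≤ i → 𝒜 i = ⊥)
    -- the complex of finitely generated graded free modules
    (F : ℤ → Type*) [∀ j, AddCommGroup (F j)] [∀ j, Module S (F j)]
    [∀ j, Module k (F j)] [∀ j, IsScalarTower k S (F j)]
    [∀ j, Module.Free S (F j)] [∀ j, Module.Finite S (F j)]
    (ℱ : (j : ℤ) → ℤ → Submodule k (F j))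
    [∀ j, DirectSum.Decomposition (ℱ j)]
    (hsmul : ∀ (j : ℤ) (i : ℕ) (n : ℤ) (s : S) (x : F j),
      s ∈ 𝒜 i → x ∈ ℱ j n → s • x ∈ ℱ j (n + i))
    -- differentials `f j : F (j+1) → F j`
    (f : (j : ℤ) → F (j + 1) →ₗ[S] F j)
    -- homogeneous of degree 0
    (hhom : ∀ (j n : ℤ) (x : F (j + 1)), x ∈ ℱ (j + 1) n → f j x ∈ ℱ j n)
    -- minimal: the image lies in `S₊ · F_j`
    (hmin : ∀ (j : ℤ) (x : F (j + 1)),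
      f j x ∈ (Ideal.span (⋃ i : ℕ, ⋃ _ : 1 ≤ i, ((𝒜 i : Set S)))) • (⊤ : Submodule S (F j)))
    -- exactness
    (hexact : ∀ j : ℤ, LinearMap.ker (f j) = LinearMap.range (f (j + 1)))
    -- exactness of the dual complex `Hom_S(−, S)`
    (hdualexact : ∀ (j : ℤ) (g : F (j + 1) →ₗ[S] S),
      g ∘ₗ f (j + 1) = 0 ↔ ∃ h : F j →ₗ[S] S, g = h ∘ₗ f j) :
    ∀ N : ℤ, {j : ℤ | ℱ j N ≠ ⊥}.Finite ∧
      ∀ J : Finset ℤ, (∀ j ∉ J, ℱ j N = ⊥) →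
        ∑ j ∈ J, ((Int.negOnePow j : ℤ) * (Module.finrank k (ℱ j N) : ℤ)) = 0 := by
  obtain ⟨N₀, hN₀⟩ := hart
  have : Module.Finite k S := moduleFinite_of_eventually_eq_bot 𝒜
    (fg_of_generated_in_degree_one h0 hgen (Submodule.fg_iff_finiteDimensional _ |>.mpr hfin)) hN₀
  have (j : ℤ) : Module.Finite k (F j) := Module.Finite.trans S (F j)
  have hmin' : ∀ j x, f j x ∈ 𝒜₊.toIdeal • (⊤ : Submodule S (F j)) := by
    rw [irrelevant_eq_span]
    exact hmin
  intro N
  obtain ⟨n₀, hn₀⟩ := exists_vanishesBelow (ℱ 0)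
  have hup (j : ℤ) (hj : 0 ≤ j) : VanishesBelow (ℱ j) (n₀ + j) := by
    induction j, hj using Int.leInduction with
    | base => simpa using hn₀
    | succ j _ ih =>
      rw [← add_assoc]
      exact ih.succ_of_exact (hsmul j) (hsmul (j + 1)) (hhom j) (hmin' j) (hmin' (j + 1))
        (hexact j) (exists_vanishesBelow _)
  obtain ⟨D₀, hD₀⟩ := exists_dualVanishesBelow (h := hsmul 1)
  have hdown (j : ℤ) (hj : j ≤ 0) : DualVanishesBelow (hsmul (j + 1)) (D₀ - j) := by
    induction j, hj using Int.leInductionDown with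
    | base => simpa using hD₀
    | pred j _ ih =>
      obtain ⟨i, rfl⟩ : ∃ i, j = i + 1 := ⟨j - 1, by ring⟩
      rw [add_sub_cancel_right, show D₀ - i = D₀ - (i + 1) + 1 by ring]
      exact ih.succ_of_dualExact (hhom (i + 1)) (hmin' i) (hmin' (i + 1)) (hdualexact i)
        exists_dualVanishesBelow
  have hhigh (j : ℤ) (hj : max 0 (N - n₀ + 1) ≤ j) : ℱ j N = ⊥ :=
    hup j (by omega) N (by omega)
  have hlow (j : ℤ) (hj : j ≤ min 1 (N + D₀ - N₀ + 1)) : ℱ j N = ⊥ := by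
    obtain ⟨i, rfl⟩ : ∃ i, j = i + 1 := ⟨j - 1, by ring⟩
    exact (hdown i (by omega)).eq_bot fun c hc => hN₀ c (by omega)
  refine ⟨(Set.finite_Ioo (min 1 (N + D₀ - N₀ + 1)) (max 0 (N - n₀ + 1))).subset
    fun j hj => ⟨not_le.mp fun h => hj (hlow j h), not_le.mp fun h => hj (hhigh j h)⟩,
    fun J hJ => ?_⟩
  refine sum_negOnePow_finrank_eq_zero (fun j => ((f j).restrictScalars k).restrict (hhom j N))
    (fun j => ker_restrict_eq_range_restrict (hhom j) (hhom (j + 1)) ?_ N) fun j hj => ?_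
  · rw [LinearMap.ker_restrictScalars, LinearMap.range_restrictScalars, hexact]
  · rw [hJ j hj, finrank_bot]

/-- **Observation (additivity of dimension along a totally acyclic complex).**
Let `S` be a standard graded Artinian algebra over a field `k` and let
`(F_j, f_j)` be a minimal homogeneous totally acyclic complex of finitely generated
graded free `S`-modules.  Then for every degree `N`, only finitely many of the
components `[F_j]_N` are nonzero, and the alternating sum of their dimensions is `0`. -/
theorem stmt_5 {k S : Type*} [Field k] [CommRing S] [Algebra k S]
    (𝒜 : ℕ → Submodule k S) [GradedAlgebra 𝒜]
    -- standard graded Artinian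
    (h0 : 𝒜 0 = (1 : Submodule k S))
    (hgen : ∀ i : ℕ, 𝒜 1 * 𝒜 i = 𝒜 (i + 1))
    (hfin : FiniteDimensional k (𝒜 1))
    (hart : ∃ N : ℕ, ∀ i : ℕ, N ≤ i → 𝒜 i = ⊥)
    -- the complex of finitely generated graded free modules
    (F : ℤ → Type*) [∀ j, AddCommGroup (F j)] [∀ j, Module S (F j)]
    [∀ j, Module k (F j)] [∀ j, IsScalarTower k S (F j)]
    [∀ j, Module.Free S (F j)] [∀ j, Module.Finite S (F j)]
    (ℱ : (j : ℤ) → ℤ → Submodule k (F j))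
    [∀ j, DirectSum.Decomposition (ℱ j)]
    (hsmul : ∀ (j : ℤ) (i : ℕ) (n : ℤ) (s : S) (x : F j),
      s ∈ 𝒜 i → x ∈ ℱ j n → s • x ∈ ℱ j (n + i))
    -- differentials `f j : F (j+1) → F j`
    (f : (j : ℤ) → F (j + 1) →ₗ[S] F j)
    (hcx : ∀ (j : ℤ) (x : F (j + 1 + 1)), f j (f (j + 1) x) = 0)
    -- homogeneous of degree 0
    (hhom : ∀ (j n : ℤ) (x : F (j + 1)), x ∈ ℱ (j + 1) n → f j x ∈ ℱ j n)
    -- minimal: the image lies in `S₊ · F_j`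
    (hmin : ∀ (j : ℤ) (x : F (j + 1)),
      f j x ∈ (Ideal.span (⋃ i : ℕ, ⋃ _ : 1 ≤ i, ((𝒜 i : Set S)))) • (⊤ : Submodule S (F j)))
    -- exactness
    (hexact : ∀ j : ℤ, LinearMap.ker (f j) = LinearMap.range (f (j + 1)))
    -- exactness of the dual complex `Hom_S(−, S)`
    (hdualexact : ∀ (j : ℤ) (g : F (j + 1) →ₗ[S] S),
      g ∘ₗ f (j + 1) = 0 ↔ ∃ h : F j →ₗ[S] S, g = h ∘ₗ f j) :
    ∀ N : ℤ, {j : ℤ | ℱ j N ≠ ⊥}.Finite ∧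
      ∀ J : Finset ℤ, (∀ j ∉ J, ℱ j N = ⊥) →
        ∑ j ∈ J, ((Int.negOnePow j : ℤ) * (Module.finrank k (ℱ j N) : ℤ)) = 0 :=
  stmt_5_general 𝒜 h0 hgen hfin hart F ℱ hsmul f hhom hmin hexact hdualexact
end

section
/- Let k be a field, P = k[x₁, …, x_c] the standard graded polynomial ring in c variables, and I a homogeneous ideal with [I]_0 = [I]_1 = 0 such that S = P/I is a compressed level algebra of socle degree e, type r, and codimension c. Assume c ≥ 2, e ≥ 2, r ≥ 2, and that it is not the case that e = 2 and r = c − 1. Then S has no homogeneous exact zero divisors: there is no pair (θ₁, θ₂) of homogeneous elements of S of positive degrees forming an exact pair of zero divisors. -/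
/-!
Let `(θ₁, θ₂)` be an exact pair of degrees `d₁ ≤ d₂`. Multiplication by `θ₁` gives exact
sequences `0 → θ₂ S_{i - d₂} → S_i → θ₁ S_i → 0`, and symmetrically for `θ₂`; eliminating the
images, the vanishing of `θ₁ S` and `θ₂ S` above the socle degree `e` becomes a family of linear
relations between values of the Hilbert function `N` of `S`. Compressedness pins `N` down: it is
`C(c - 1 + i, c - 1)` up to a threshold `t ≥ (e - 1) / 2` and `r C(c - 1 + e - i, c - 1)` above
it, and `t < d₁ + d₂` because lifts of `θ₁` and `θ₂` multiply to a nonzero element of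
`I_{d₁ + d₂}`. Evaluating the relations at `z = e` and `z = e - d₁ + 1` (at `z = d₁` when
`e < d₁ + d₂`) then contradicts elementary inequalities between binomial coefficients, except when
`e = 2` and `r = c - 1`.
-/

/-- `(a, b)` is an exact pair of zero divisors in `S`:
`(0 :_S a) = (b)` and `(0 :_S b) = (a)`. -/
def IsExactZeroDivisorPair {S : Type*} [CommRing S] (a b : S) : Prop :=
  (∀ s : S, s * a = 0 ↔ ∃ c : S, s = c * b) ∧
  (∀ s : S, s * b = 0 ↔ ∃ c : S, s = c * a)

/-- The degree-`i` homogeneous component of the standard graded quotient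
`MvPolynomial σ k ⧸ I`. -/
noncomputable def quotComponent {k : Type*} [Field k] {σ : Type*}
    (I : Ideal (MvPolynomial σ k)) (i : ℕ) : Submodule k (MvPolynomial σ k ⧸ I) :=
  (MvPolynomial.homogeneousSubmodule σ k i).map (Ideal.Quotient.mkₐ k I).toLinearMap

open MvPolynomial Module
open scoped Pointwise

namespace Nat

lemma multichoose_pos {n : ℕ} (hn : 0 < n) (k : ℕ) : 0 < n.multichoose k := by
  rw [multichoose_eq]
  exact choose_pos (by omega)

lemma choose_sub_one_add {n : ℕ} (hn : 0 < n) (k : ℕ) :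
    (n - 1 + k).choose (n - 1) = n.multichoose k := by
  rw [choose_symm_add, multichoose_eq, show n - 1 + k = n + k - 1 by omega]

lemma multichoose_mono_right {n : ℕ} (hn : 0 < n) : Monotone n.multichoose := by
  obtain ⟨n, rfl⟩ := exists_add_one_eq.mpr hn
  exact monotone_nat_of_le_succ fun k => by rw [multichoose_succ_succ]; omega

lemma multichoose_strictMono_right {n : ℕ} (hn : 1 < n) : StrictMono n.multichoose := by
  obtain ⟨n, rfl⟩ := exists_add_one_eq.mpr (zero_lt_of_lt hn)
  refine strictMono_nat_of_lt_succ fun k => ?_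
  have := multichoose_pos (lt_of_succ_lt_succ hn) (k + 1)
  rw [multichoose_succ_succ]
  omega

lemma le_multichoose (n : ℕ) {k : ℕ} (hk : 0 < k) : n ≤ n.multichoose k := by
  rcases n.eq_zero_or_pos with rfl | hn
  · exact zero_le _
  · simpa only [multichoose_one_right] using multichoose_mono_right hn hk

lemma multichoose_add_le {n : ℕ} (hn : 0 < n) (a b : ℕ) :
    n.multichoose a + n.multichoose b ≤ n.multichoose (a + b) + 1 := by
  obtain ⟨n, rfl⟩ := exists_add_one_eq.mpr hn
  induction b with
  | zero => simp [multichoose_zero_right]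
  | succ b ih =>
    rw [← add_assoc, multichoose_succ_succ, multichoose_succ_succ]
    have : n.multichoose (b + 1) ≤ n.multichoose (a + b + 1) := by
      rcases n.eq_zero_or_pos with rfl | hn
      · simp [multichoose_zero_succ]
      · exact multichoose_mono_right hn (by omega)
    omega

end Nat

open Nat

/-- Hilbert function of a compressed level algebra of codimension `c`, socle degree `e` and type `r`,
indexed by `ℤ`; `c.multichoose i = C(c - 1 + i, c - 1)`. -/
structure IsCompressedHilbertFunction (c e r : ℕ) (N : ℤ → ℕ) : Prop where
  eq_min : ∀ i : ℕ, i ≤ e → N i = min (c.multichoose i) (r * c.multichoose (e - i))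
  eq_zero_of_neg : ∀ {z : ℤ}, z < 0 → N z = 0
  eq_zero_of_gt : ∀ {z : ℤ}, (e : ℤ) < z → N z = 0

/-- `t` is the degree after which the minimum defining a compressed Hilbert function switches from
its first to its second term. -/
structure IsCompressedHilbertFunction.Threshold (c e r t : ℕ) (N : ℤ → ℕ) : Prop where
  le_two_mul_add_one : e ≤ 2 * t + 1
  eq_of_le : ∀ {z : ℤ} {i : ℕ}, z = i → i ≤ t → N z = c.multichoose i
  eq_of_lt : ∀ {z : ℤ} {j : ℕ}, z + j = e → (t : ℤ) < z → N z = r * c.multichoose j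
  eq_zero_of_neg : ∀ {z : ℤ}, z < 0 → N z = 0

/-- The relation that an exact pair `(θ₁, θ₂)` of degrees `d₁`, `d₂` imposes on the Hilbert function
`N`: `θ₁ S` vanishes in degree `z + d₁ > e`, and for `z < 2 (d₁ + d₂)` its dimension there is the
alternating sum `N z - N (z - d₂) + N (z - d₁ - d₂) - N (z - d₁ - 2 d₂)`. -/
def ExactPairRelation (N : ℤ → ℕ) (e d₁ d₂ : ℕ) : Prop :=
  ∀ z : ℤ, (e : ℤ) - d₁ < z → z < 2 * (d₁ + d₂) →
    N (z - d₂) + N (z - d₁ - 2 * d₂) = N z + N (z - d₁ - d₂)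

namespace IsCompressedHilbertFunction

variable {c e r t d₁ d₂ : ℕ} {N : ℤ → ℕ}

lemma apply_zero (hN : IsCompressedHilbertFunction c e r N) (hc : 0 < c) (hr : 0 < r) :
    N 0 = 1 := by
  have := multichoose_pos hc e
  rw [← Nat.cast_zero, hN.eq_min 0 (zero_le e), multichoose_zero_right, Nat.sub_zero]
  exact min_eq_left (by nlinarith)

lemma apply_ne_one (hN : IsCompressedHilbertFunction c e r N) (hc : 2 ≤ c) (hr : 2 ≤ r) {i : ℕ}
    (hi : 0 < i) : N i ≠ 1 := by
  by_cases hie : i ≤ e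
  · have := le_multichoose c hi
    have := multichoose_pos (by omega : 0 < c) (e - i)
    rw [hN.eq_min i hie]
    exact ne_of_gt (lt_min (by omega) (by nlinarith))
  · rw [hN.eq_zero_of_gt (by omega)]
    exact zero_ne_one

lemma exists_threshold (hN : IsCompressedHilbertFunction c e r N) (hc : 0 < c) (hr : 0 < r) :
    ∃ t, Threshold c e r t N := by
  have hmono := multichoose_mono_right hc
  set P : ℕ → Prop := fun i => c.multichoose i ≤ r * c.multichoose (e - i)
  have hP : ∀ {i j}, i ≤ j → j ≤ e → P j → P i := fun hij _ hj =>
    (hmono hij).trans (hj.trans (Nat.mul_le_mul_left r (hmono (by omega))))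
  have hhalf : P (e / 2) := by
    have := multichoose_pos hc (e - e / 2)
    exact (hmono (by omega)).trans (Nat.le_mul_of_pos_left _ hr)
  refine ⟨Nat.findGreatest P e, ?_, ?_, ?_, hN.eq_zero_of_neg⟩
  · have := Nat.le_findGreatest (Nat.div_le_self e 2) hhalf
    omega
  · rintro z i rfl hi
    have ht := Nat.findGreatest_spec (Nat.div_le_self e 2) hhalf
    rw [hN.eq_min i (hi.trans (Nat.findGreatest_le e))]
    exact min_eq_left (hP hi (Nat.findGreatest_le e) ht)
  · intro z j hj hz
    obtain ⟨i, rfl⟩ : ∃ i : ℕ, z = i := ⟨z.toNat, by omega⟩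
    obtain rfl : j = e - i := by omega
    rw [hN.eq_min i (by omega)]
    exact min_eq_right
      (le_of_not_ge (Nat.findGreatest_is_greatest (P := P) (n := e) (by omega) (by omega)))

lemma false_of_lt_add (hN : IsCompressedHilbertFunction c e r N) (hc : 2 ≤ c) (hr : 2 ≤ r)
    (hd₁ : 0 < d₁) (hd₂ : 0 < d₂) (he : e < d₁ + d₂) (hB : ExactPairRelation N e d₂ d₁) :
    False := by
  have h₁ : N (d₁ - d₁) = 1 := by rw [sub_self]; exact hN.apply_zero (by omega) (by omega)
  have h₂ : N (d₁ - d₂ - 2 * d₁) = 0 := hN.eq_zero_of_neg (by omega)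
  have h₃ : N (d₁ - d₂ - d₁) = 0 := hN.eq_zero_of_neg (by omega)
  have := hB d₁ (by omega) (by omega)
  exact hN.apply_ne_one hc hr hd₁ (by omega)

namespace Threshold

lemma apply_top (ht : Threshold c e r t N) (hte : t < e) : N e = r := by
  rw [ht.eq_of_lt (j := 0) (by simp) (by omega), multichoose_zero_right, mul_one]

lemma apply_le_one_of_nonpos (ht : Threshold c e r t N) {z : ℤ} (hz : z ≤ 0) : N z ≤ 1 := by
  rcases hz.lt_or_eq with hz | rfl
  · rw [ht.eq_zero_of_neg hz]; exact zero_le_one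
  · rw [ht.eq_of_le (i := 0) Nat.cast_zero.symm (zero_le t), multichoose_zero_right]

lemma eq_of_sub_le (ht : Threshold c e r t N) (hc : 2 ≤ c) (hd : d₁ ≤ d₂)
    (htD : t < d₁ + d₂) (hDe : d₁ + d₂ ≤ e) (h : e - d₁ ≤ t)
    (hA : ExactPairRelation N e d₁ d₂) (hB : ExactPairRelation N e d₂ d₁) : d₁ = d₂ := by
  have h₀ := ht.apply_top (by omega)
  have h₁ : N (e - d₂) = c.multichoose (e - d₂) := ht.eq_of_le (by omega) (by omega)
  have h₂ : N (e - d₁) = c.multichoose (e - d₁) := ht.eq_of_le (by omega) h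
  have h₃ : N (e - d₁ - 2 * d₂) = 0 := ht.eq_zero_of_neg (by omega)
  have h₄ : N (e - d₂ - 2 * d₁) = 0 := ht.eq_zero_of_neg (by omega)
  have h₅ : N (e - d₂ - d₁) = N (e - d₁ - d₂) := by rw [sub_right_comm]
  have := hA e (by omega) (by omega)
  have := hB e (by omega) (by omega)
  have := (multichoose_strictMono_right hc).injective (show c.multichoose (e - d₂) =
    c.multichoose (e - d₁) by omega)
  omega

lemma false_of_sub_le {d : ℕ} (ht : Threshold c e r t N) (hc : 2 ≤ c) (hr : 2 ≤ r)
    (hne : ¬(e = 2 ∧ r = c - 1)) (hd : 0 < d) (htd : t < 2 * d) (hde : 2 * d ≤ e)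
    (h : e - d ≤ t) (hA : ExactPairRelation N e d d) : False := by
  have hM := multichoose_strictMono_right hc
  obtain ⟨m, hm⟩ : ∃ m, e = m + 2 * d := ⟨e - 2 * d, by omega⟩
  have hA₀ : c.multichoose (m + d) = r + c.multichoose m := by
    have h₁ : N (e - d) = c.multichoose (m + d) := ht.eq_of_le (by omega) (by omega)
    have h₂ : N (e - d - 2 * d) = 0 := ht.eq_zero_of_neg (by omega)
    have h₃ : N (e - d - d) = c.multichoose m := ht.eq_of_le (by omega) (by omega)
    have := ht.apply_top (by omega)
    have := hA e (by omega) (by omega)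
    omega
  have hA₁ : c.multichoose (m + 1) = N (e - d + 1) + N (e - d + 1 - d - d) := by
    have h₁ : N (e - d + 1 - d) = c.multichoose (m + 1) := ht.eq_of_le (by omega) (by omega)
    have h₂ : N (e - d + 1 - d - 2 * d) = 0 := ht.eq_zero_of_neg (by omega)
    have := hA (e - d + 1) (by omega) (by omega)
    omega
  have hε := ht.apply_le_one_of_nonpos (z := e - d + 1 - d - d) (by omega)
  rcases (show e - d + 1 ≤ t ∨ t = e - d by omega) with hlow | rfl
  · have h₁ : N (e - d + 1) = c.multichoose (e - d + 1) := ht.eq_of_le (by omega) hlow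
    have := hM (show m + 1 < e - d + 1 by omega)
    omega
  have h₁ : N (e - d + 1) = r * c.multichoose (d - 1) := ht.eq_of_lt (by omega) (by omega)
  rcases (show 2 ≤ d ∨ d = 1 by omega) with hd | rfl
  · have : r * 2 ≤ r * c.multichoose (d - 1) :=
      Nat.mul_le_mul_left r (hc.trans (le_multichoose c (show 0 < d - 1 by omega)))
    have := hM.monotone (show m + 1 ≤ d by omega)
    have := multichoose_add_le (show 0 < c by omega) m d
    omega
  · obtain rfl : m = 0 := by
      by_contra hm0
      have := le_multichoose c (show 0 < m by omega)
      rw [Nat.sub_self, multichoose_zero_right] at h₁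
      omega
    have h₂ : N (e - 1 + 1 - 1 - 1) = 1 := by
      rw [ht.eq_of_le (i := 0) (by omega) (by omega), multichoose_zero_right]
    rw [Nat.sub_self, multichoose_zero_right] at h₁
    simp only [zero_add, multichoose_one_right, multichoose_zero_right] at hA₀
    omega

lemma exists_multichoose_eq_of_lt_sub (ht : Threshold c e r t N) (hc : 2 ≤ c) (hr : 2 ≤ r)
    (htD : t < d₁ + d₂) (hDe : d₁ + d₂ ≤ e) (h : t < e - d₁) (hB : ExactPairRelation N e d₂ d₁) :
    ∃ b, e = 2 * d₁ + b + d₂ ∧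
      r * c.multichoose d₁ + c.multichoose b = r + c.multichoose (d₁ + b) := by
  obtain ⟨m, hm⟩ : ∃ m, e = m + d₁ + d₂ := ⟨e - d₁ - d₂, by omega⟩
  have hmt : m ≤ t := by have := ht.le_two_mul_add_one; omega
  have hB₀ : r * c.multichoose d₁ + N (e - d₂ - 2 * d₁) = r + c.multichoose m := by
    have h₁ : N (e - d₁) = r * c.multichoose d₁ := ht.eq_of_lt (by omega) (by omega)
    have h₂ : N (e - d₂ - d₁) = c.multichoose m := ht.eq_of_le (by omega) hmt
    have := ht.apply_top (by omega)
    have := hB e (by omega) (by omega)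
    omega
  refine ⟨m - d₁, ?_⟩
  by_cases hmd : d₁ ≤ m
  · rw [ht.eq_of_le (i := m - d₁) (by omega) (by omega)] at hB₀
    exact ⟨by omega, by rwa [show d₁ + (m - d₁) = m by omega]⟩
  · rw [ht.eq_zero_of_neg (by omega), add_zero] at hB₀
    have := multichoose_strictMono_right hc (show m < d₁ by omega)
    have := multichoose_pos (show 0 < c by omega) m
    nlinarith

lemma false_of_lt_sub (ht : Threshold c e r t N) (hc : 2 ≤ c) (hr : 2 ≤ r)
    (hd₁ : 0 < d₁) (htD : t < d₁ + d₂) (hDe : d₁ + d₂ ≤ e) (h : t < e - d₁)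
    (hA : ExactPairRelation N e d₁ d₂) (hB : ExactPairRelation N e d₂ d₁) : False := by
  obtain ⟨b, hb, hB₁⟩ := ht.exists_multichoose_eq_of_lt_sub hc hr htD hDe h hB
  have hbt : d₁ + b ≤ t := by have := ht.le_two_mul_add_one; omega
  obtain rfl | hc := hc.eq_or_lt
  · simp only [multichoose_two] at hB₁
    nlinarith
  have hA₁ : N (e - d₁ + 1 - d₂) + N (e - d₁ + 1 - d₁ - 2 * d₂) =
      r * c.multichoose (d₁ - 1) + c.multichoose (b + 1) := by
    have h₁ : N (e - d₁ + 1) = r * c.multichoose (d₁ - 1) := ht.eq_of_lt (by omega) (by omega)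
    have h₂ : N (e - d₁ + 1 - d₁ - d₂) = c.multichoose (b + 1) := ht.eq_of_le (by omega) (by omega)
    have := hA (e - d₁ + 1) (by omega) (by omega)
    omega
  have hε := ht.apply_le_one_of_nonpos (z := e - d₁ + 1 - d₁ - 2 * d₂) (by omega)
  rcases hbt.lt_or_eq with hbt | rfl
  · -- with Pascal's rule, `hA₁` and `hB₁` combine into a relation between first differences
    have h₀ : N (e - d₁ + 1 - d₂) = c.multichoose (d₁ + b + 1) := ht.eq_of_le (by omega) hbt
    obtain ⟨n, rfl⟩ : ∃ n, c = n + 1 := ⟨c - 1, by omega⟩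
    obtain ⟨a, rfl⟩ : ∃ a, d₁ = a + 1 := ⟨d₁ - 1, by omega⟩
    simp only [Nat.add_sub_cancel, ← add_assoc, multichoose_succ_succ] at hA₁ hB₁ h₀
    have h₁ : r * 2 ≤ r * n.multichoose (a + 1) :=
      Nat.mul_le_mul_left r ((show 2 ≤ n by omega).trans (le_multichoose n (succ_pos a)))
    have h₂ := multichoose_mono_right (show 0 < n by omega) (show b + 1 ≤ a + 1 + b + 1 by omega)
    nlinarith
  · have h₀ : N (e - d₁ + 1 - d₂) = r * c.multichoose (d₁ - 1 + d₂) :=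
      ht.eq_of_lt (by omega) (by omega)
    have h₁ := multichoose_add_le (show 0 < c by omega) (d₁ - 1) d₂
    have h₂ := multichoose_mono_right (show 0 < c by omega) (show b + 1 ≤ d₂ by omega)
    have h₃ := le_multichoose c (succ_pos b)
    nlinarith

end Threshold

theorem false_of_exactPairRelation (hN : IsCompressedHilbertFunction c e r N) (hc : 2 ≤ c)
    (hr : 2 ≤ r) (hne : ¬(e = 2 ∧ r = c - 1)) (hd₁ : 0 < d₁) (hd : d₁ ≤ d₂)
    (hD : N (d₁ + d₂ : ℕ) < c.multichoose (d₁ + d₂))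
    (hA : ExactPairRelation N e d₁ d₂) (hB : ExactPairRelation N e d₂ d₁) : False := by
  obtain ⟨t, ht⟩ := hN.exists_threshold (by omega) (by omega)
  have htD : t < d₁ + d₂ := by
    by_contra! h
    exact hD.ne (ht.eq_of_le rfl h)
  rcases lt_or_ge e (d₁ + d₂) with he | hDe
  · exact hN.false_of_lt_add hc hr hd₁ (by omega) he hB
  rcases le_or_gt (e - d₁) t with h | h
  · obtain rfl := ht.eq_of_sub_le hc hd htD hDe h hA hB
    exact ht.false_of_sub_le hc hr hne hd₁ (by omega) (by omega) h hA
  · exact ht.false_of_lt_sub hc hr hd₁ htD hDe h hA hB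

end IsCompressedHilbertFunction

namespace MvPolynomial

variable {σ R : Type*} [CommRing R]

instance [Finite σ] (n : ℕ) : Module.Finite R (homogeneousSubmodule σ R n) :=
  Module.Finite.iff_fg.mpr (homogeneousSubmodule_fg σ R n)

lemma finrank_homogeneousSubmodule [Fintype σ] [StrongRankCondition R] (n : ℕ) :
    finrank R (homogeneousSubmodule σ R n) = (Fintype.card σ).multichoose n := by
  classical
  have hdeg : {d : σ →₀ ℕ | d.degree = n} = ↑((Finset.univ : Finset σ).finsuppAntidiag n) := by
    ext d
    simp [Finset.mem_finsuppAntidiag, Finsupp.degree_eq_sum]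
  rw [homogeneousSubmodule_eq_finsupp_supported, hdeg,
    (AddMonoidAlgebra.supportedEquivFinsupp _).finrank_eq, finrank_finsupp_self]
  simp [Finset.card_finsuppAntidiag_nat_eq_multichoose]

attribute [local instance] gradedAlgebra in
lemma homogeneousComponent_mul_of_le {p q : MvPolynomial σ R} {d n : ℕ} (hp : p.IsHomogeneous d)
    (h : d ≤ n) : homogeneousComponent n (q * p) = homogeneousComponent (n - d) q * p := by
  rw [← decomposition.decompose'_apply, ← decomposition.decompose'_apply]
  exact DirectSum.coe_decompose_mul_of_right_mem_of_le (homogeneousSubmodule σ R) hp h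

attribute [local instance] gradedAlgebra in
lemma homogeneousComponent_mul_of_lt {p q : MvPolynomial σ R} {d n : ℕ} (hp : p.IsHomogeneous d)
    (h : n < d) : homogeneousComponent n (q * p) = 0 := by
  rw [← decomposition.decompose'_apply]
  exact DirectSum.coe_decompose_mul_of_right_mem_of_not_le (homogeneousSubmodule σ R) hp
    (not_le.mpr h)

end MvPolynomial

noncomputable def gradedFinrank {k M : Type*} [Field k] [AddCommGroup M] [Module k M]
    (V : ℕ → Submodule k M) (z : ℤ) : ℕ :=
  if 0 ≤ z then finrank k (V z.toNat) else 0

section gradedFinrank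

variable {k M : Type*} [Field k] [AddCommGroup M] [Module k M] {V : ℕ → Submodule k M}

@[simp]
lemma gradedFinrank_natCast (n : ℕ) : gradedFinrank V n = finrank k (V n) := by
  simp [gradedFinrank]

lemma gradedFinrank_of_neg {z : ℤ} (hz : z < 0) : gradedFinrank V z = 0 := by
  simp [gradedFinrank, not_le.mpr hz]

lemma gradedFinrank_of_eq_bot {z : ℤ} (hV : ∀ n : ℕ, (n : ℤ) = z → V n = ⊥) :
    gradedFinrank V z = 0 := by
  rcases lt_or_ge z 0 with hz | hz
  · exact gradedFinrank_of_neg hz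
  · obtain ⟨n, rfl⟩ := Int.eq_ofNat_of_zero_le hz
    rw [gradedFinrank_natCast, hV n rfl, finrank_bot]

end gradedFinrank

section Quotient

variable {σ k : Type*} [Field k] {I : Ideal (MvPolynomial σ k)}

lemma mem_quotComponent {s : MvPolynomial σ k ⧸ I} {i : ℕ} :
    s ∈ quotComponent I i ↔
      ∃ p : MvPolynomial σ k, p.IsHomogeneous i ∧ Ideal.Quotient.mk I p = s := by
  simp only [quotComponent, Submodule.mem_map, mem_homogeneousSubmodule,
    AlgHom.toLinearMap_apply, Ideal.Quotient.mkₐ_eq_mk]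

lemma mul_mem_quotComponent {a b : MvPolynomial σ k ⧸ I} {i j : ℕ}
    (ha : a ∈ quotComponent I i) (hb : b ∈ quotComponent I j) :
    a * b ∈ quotComponent I (i + j) := by
  obtain ⟨p, hp, rfl⟩ := mem_quotComponent.1 ha
  obtain ⟨q, hq, rfl⟩ := mem_quotComponent.1 hb
  exact mem_quotComponent.2 ⟨p * q, hp.mul hq, map_mul _ _ _⟩

instance [Finite σ] (i : ℕ) : FiniteDimensional k (quotComponent I i) := by
  unfold quotComponent; infer_instance

lemma exists_mem_quotComponent_of_eq_mul
    (hI : ∀ p ∈ I, ∀ j : ℕ, homogeneousComponent j p ∈ I) {θ x u : MvPolynomial σ k ⧸ I}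
    {d i : ℕ} (hθ : θ ∈ quotComponent I d) (hx : x ∈ quotComponent I i) (hxu : x = u * θ) :
    if d ≤ i then ∃ u' ∈ quotComponent I (i - d), x = u' * θ else x = 0 := by
  obtain ⟨p, hp, rfl⟩ := mem_quotComponent.1 hx
  obtain ⟨q, hq, rfl⟩ := mem_quotComponent.1 hθ
  obtain ⟨u, rfl⟩ := Ideal.Quotient.mk_surjective u
  rw [← map_mul, Ideal.Quotient.eq] at hxu
  have hi := hI _ hxu i
  rw [map_sub, homogeneousComponent_eq_self hp] at hi
  split_ifs with hdi
  · rw [homogeneousComponent_mul_of_le hq hdi] at hi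
    exact ⟨_, mem_quotComponent.2 ⟨_, homogeneousComponent_isHomogeneous _ _, rfl⟩,
      by rw [← map_mul]; exact Ideal.Quotient.eq.mpr hi⟩
  · rwa [homogeneousComponent_mul_of_lt hq (not_le.mp hdi), sub_zero,
      ← Ideal.Quotient.eq_zero_iff_mem] at hi

lemma not_isUnit_of_mem_quotComponent [Nontrivial (MvPolynomial σ k ⧸ I)]
    (hI : ∀ p ∈ I, ∀ j : ℕ, homogeneousComponent j p ∈ I) {θ : MvPolynomial σ k ⧸ I} {d : ℕ}
    (hd : 0 < d) (hθ : θ ∈ quotComponent I d) : ¬IsUnit θ := by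
  intro hunit
  obtain ⟨u, hu⟩ := hunit.exists_left_inv
  have h := exists_mem_quotComponent_of_eq_mul hI hθ (i := 0)
    (mem_quotComponent.2 ⟨1, isHomogeneous_one σ k, map_one _⟩) hu.symm
  rw [if_neg (by omega)] at h
  exact one_ne_zero h

lemma finrank_quotComponent_lt [Fintype σ] {p : MvPolynomial σ k} {n : ℕ} (hp : p.IsHomogeneous n)
    (hpI : p ∈ I) (hp0 : p ≠ 0) :
    finrank k (quotComponent I n) < (Fintype.card σ).multichoose n := by
  set f := (Ideal.Quotient.mkₐ k I).toLinearMap.domRestrict (homogeneousSubmodule σ k n)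
  have hf := f.finrank_range_add_finrank_ker
  rw [LinearMap.range_domRestrict, finrank_homogeneousSubmodule] at hf
  have hker : 0 < finrank k (LinearMap.ker f) := by
    have hpf : (⟨p, hp⟩ : homogeneousSubmodule σ k n) ∈ LinearMap.ker f := by
      simpa [f, Ideal.Quotient.eq_zero_iff_mem] using hpI
    exact (Module.finrank_pos_iff (R := k)).mpr
      (nontrivial_of_ne (⟨_, hpf⟩ : LinearMap.ker f) 0 (by simpa [Subtype.ext_iff] using hp0))
  exact (Nat.lt_add_of_pos_right hker).trans_eq hf

end Quotient

namespace IsExactZeroDivisorPair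

variable {S : Type*} [CommRing S] {a b : S}

lemma symm (h : IsExactZeroDivisorPair a b) : IsExactZeroDivisorPair b a := ⟨h.2, h.1⟩

lemma mul_eq_zero (h : IsExactZeroDivisorPair a b) : a * b = 0 :=
  (h.2 a).mpr ⟨1, (one_mul a).symm⟩

variable {σ k : Type*} [Field k] {I : Ideal (MvPolynomial σ k)} {θ₁ θ₂ : MvPolynomial σ k ⧸ I}
  {d₁ d₂ : ℕ}

lemma ne_zero [Nontrivial (MvPolynomial σ k ⧸ I)]
    (hI : ∀ p ∈ I, ∀ j : ℕ, homogeneousComponent j p ∈ I) (hd₂ : 0 < d₂)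
    (hθ₂ : θ₂ ∈ quotComponent I d₂) (h : IsExactZeroDivisorPair θ₁ θ₂) : θ₁ ≠ 0 := by
  rintro rfl
  obtain ⟨u, hu⟩ := (h.1 1).mp (mul_zero 1)
  exact not_isUnit_of_mem_quotComponent hI hd₂ hθ₂ (.of_mul_eq_one_right u hu.symm)

lemma finrank_quotComponent_add_lt [Fintype σ] [Nontrivial (MvPolynomial σ k ⧸ I)]
    (hI : ∀ p ∈ I, ∀ j : ℕ, homogeneousComponent j p ∈ I) (hd₁ : 0 < d₁) (hd₂ : 0 < d₂)
    (hθ₁ : θ₁ ∈ quotComponent I d₁) (hθ₂ : θ₂ ∈ quotComponent I d₂)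
    (h : IsExactZeroDivisorPair θ₁ θ₂) :
    finrank k (quotComponent I (d₁ + d₂)) < (Fintype.card σ).multichoose (d₁ + d₂) := by
  obtain ⟨p₁, hp₁, rfl⟩ := mem_quotComponent.1 hθ₁
  obtain ⟨p₂, hp₂, rfl⟩ := mem_quotComponent.1 hθ₂
  refine finrank_quotComponent_lt (hp₁.mul hp₂) ?_ (mul_ne_zero ?_ ?_)
  · rw [← Ideal.Quotient.eq_zero_iff_mem, map_mul, h.mul_eq_zero]
  · rintro rfl; exact h.ne_zero hI hd₂ hθ₂ (map_zero _)
  · rintro rfl; exact h.symm.ne_zero hI hd₁ hθ₁ (map_zero _)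

lemma quotComponent_inf_ker_smul (hI : ∀ p ∈ I, ∀ j : ℕ, homogeneousComponent j p ∈ I)
    (hθ₂ : θ₂ ∈ quotComponent I d₂) (h : IsExactZeroDivisorPair θ₁ θ₂) (i : ℕ) :
    quotComponent I i ⊓ LinearMap.ker (DistribSMul.toLinearMap k _ θ₁) =
      if d₂ ≤ i then θ₂ • quotComponent I (i - d₂) else ⊥ := by
  refine le_antisymm ?_ ?_
  · rintro x ⟨hx, hxθ⟩
    obtain ⟨u, hu⟩ := (h.1 x).mp ((mul_comm x θ₁).trans hxθ)
    have := exists_mem_quotComponent_of_eq_mul hI hθ₂ hx hu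
    split_ifs at this ⊢ with hi
    · obtain ⟨u', hu', rfl⟩ := this
      exact (Submodule.mem_smul_pointwise_iff_exists _ _ _).mpr ⟨u', hu', mul_comm θ₂ u'⟩
    · exact (Submodule.mem_bot k).mpr this
  · split_ifs with hi
    · rintro _ ⟨u, hu, rfl⟩
      refine ⟨?_, ?_⟩
      · show θ₂ * u ∈ quotComponent I i
        simpa only [Nat.sub_add_cancel hi, mul_comm] using mul_mem_quotComponent hu hθ₂
      · show θ₁ * (θ₂ * u) = 0
        rw [← mul_assoc, h.mul_eq_zero, zero_mul]
    · exact bot_le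

lemma gradedFinrank_quotComponent_eq_add [Finite σ]
    (hI : ∀ p ∈ I, ∀ j : ℕ, homogeneousComponent j p ∈ I)
    (hθ₂ : θ₂ ∈ quotComponent I d₂) (h : IsExactZeroDivisorPair θ₁ θ₂) (z : ℤ) :
    gradedFinrank (quotComponent I) z =
      gradedFinrank (θ₁ • quotComponent I ·) z +
        gradedFinrank (θ₂ • quotComponent I ·) (z - d₂) := by
  rcases lt_or_ge z 0 with hz | hz
  · simp only [gradedFinrank_of_neg hz, gradedFinrank_of_neg (show z - d₂ < 0 by omega)]
  obtain ⟨i, rfl⟩ := Int.eq_ofNat_of_zero_le hz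
  set f := (DistribSMul.toLinearMap k _ θ₁).domRestrict (quotComponent I i)
  have hf := f.finrank_range_add_finrank_ker
  rw [LinearMap.range_domRestrict, ← Submodule.finrank_map_subtype_eq, LinearMap.ker_domRestrict,
    Submodule.map_comap_subtype, h.quotComponent_inf_ker_smul hI hθ₂] at hf
  simp only [gradedFinrank_natCast, ← hf]
  congr 1
  by_cases hi : d₂ ≤ i
  · rw [if_pos hi, show (i : ℤ) - d₂ = (i - d₂ : ℕ) by omega, gradedFinrank_natCast]
  · rw [if_neg hi, finrank_bot, gradedFinrank_of_neg (by omega)]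

end IsExactZeroDivisorPair

lemma gradedFinrank_smul_quotComponent_eq_zero {σ k : Type*} [Field k]
    {I : Ideal (MvPolynomial σ k)} {e d : ℕ} (htop : ∀ i : ℕ, e < i → quotComponent I i = ⊥)
    {θ : MvPolynomial σ k ⧸ I} (hθ : θ ∈ quotComponent I d) {z : ℤ} (hz : (e : ℤ) - d < z) :
    gradedFinrank (θ • quotComponent I ·) z = 0 := by
  refine gradedFinrank_of_eq_bot fun n hn => eq_bot_iff.mpr ?_
  rw [← htop (n + d) (by omega)]
  rintro _ ⟨u, hu, rfl⟩
  rw [add_comm n]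
  exact mul_mem_quotComponent hθ hu

lemma exactPairRelation_of_eq_add {N A B : ℤ → ℕ} {e d₁ d₂ : ℕ}
    (hNA : ∀ z, N z = A z + B (z - d₂)) (hNB : ∀ z, N z = B z + A (z - d₁))
    (hA : ∀ z : ℤ, (e : ℤ) - d₁ < z → A z = 0) (hA_neg : ∀ z : ℤ, z < 0 → A z = 0) :
    ExactPairRelation N e d₁ d₂ := by
  intro z hz hz'
  have h₁ := hNA z
  have h₂ := hNB (z - d₂)
  have h₃ := hNA (z - d₁ - d₂)
  have h₄ := hNB (z - d₁ - 2 * d₂)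
  rw [sub_right_comm z] at h₂
  rw [show z - d₁ - d₂ - d₂ = z - d₁ - 2 * d₂ by ring] at h₃
  have := hA z hz
  have := hA_neg (z - d₁ - 2 * d₂ - d₁) (by omega)
  omega

lemma IsExactZeroDivisorPair.exactPairRelation {σ k : Type*} [Field k] [Finite σ]
    {I : Ideal (MvPolynomial σ k)} {θ₁ θ₂ : MvPolynomial σ k ⧸ I} {d₁ d₂ e : ℕ}
    (hI : ∀ p ∈ I, ∀ j : ℕ, homogeneousComponent j p ∈ I)
    (htop : ∀ i : ℕ, e < i → quotComponent I i = ⊥)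
    (hθ₁ : θ₁ ∈ quotComponent I d₁) (hθ₂ : θ₂ ∈ quotComponent I d₂)
    (h : IsExactZeroDivisorPair θ₁ θ₂) :
    ExactPairRelation (gradedFinrank (quotComponent I)) e d₁ d₂ :=
  exactPairRelation_of_eq_add (h.gradedFinrank_quotComponent_eq_add hI hθ₂)
    (h.symm.gradedFinrank_quotComponent_eq_add hI hθ₁)
    (fun _ => gradedFinrank_smul_quotComponent_eq_zero htop hθ₁) (fun _ => gradedFinrank_of_neg)

lemma isCompressedHilbertFunction_gradedFinrank {σ k : Type*} [Field k]
    {I : Ideal (MvPolynomial σ k)} {c e r : ℕ} (hc : 0 < c)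
    (htop : ∀ i : ℕ, e < i → quotComponent I i = ⊥)
    (hcompressed : ∀ i : ℕ, i ≤ e →
      finrank k (quotComponent I i) =
        min (Nat.choose (c - 1 + i) (c - 1)) (r * Nat.choose (c - 1 + (e - i)) (c - 1))) :
    IsCompressedHilbertFunction c e r (gradedFinrank (quotComponent I)) where
  eq_min i hi := by
    rw [gradedFinrank_natCast, hcompressed i hi, choose_sub_one_add hc, choose_sub_one_add hc]
  eq_zero_of_neg := gradedFinrank_of_neg
  eq_zero_of_gt hz := gradedFinrank_of_eq_bot fun n hn => htop n (by omega)

theorem stmt_10_general {k : Type*} [Field k] (c : ℕ)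
    (I : Ideal (MvPolynomial (Fin c) k))
    -- `I` is homogeneous
    (hIhom : ∀ p ∈ I, ∀ j : ℕ, MvPolynomial.homogeneousComponent j p ∈ I)
    (e r : ℕ)
    -- `S` is a level algebra of socle degree `e` and type `r`:
    (htop : ∀ i : ℕ, e < i → quotComponent I i = ⊥)
    -- `S` is compressed:
    (hcompressed : ∀ i : ℕ, i ≤ e →
      Module.finrank k (quotComponent I i) =
        min (Nat.choose (c - 1 + i) (c - 1)) (r * Nat.choose (c - 1 + (e - i)) (c - 1)))
    -- the numerical hypotheses of case (2)
    (hc : 2 ≤ c) (hr2 : 2 ≤ r) (hne : ¬(e = 2 ∧ r = c - 1)) :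
    ¬ ∃ (d₁ d₂ : ℕ) (θ₁ θ₂ : MvPolynomial (Fin c) k ⧸ I),
        1 ≤ d₁ ∧ 1 ≤ d₂ ∧ θ₁ ∈ quotComponent I d₁ ∧ θ₂ ∈ quotComponent I d₂ ∧
        IsExactZeroDivisorPair θ₁ θ₂ := by
  rintro ⟨d₁, d₂, θ₁, θ₂, hd₁, hd₂, hθ₁, hθ₂, hpair⟩
  wlog hd : d₁ ≤ d₂ generalizing d₁ d₂ θ₁ θ₂
  · exact this d₂ d₁ θ₂ θ₁ hd₂ hd₁ hθ₂ hθ₁ hpair.symm (by omega)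
  have hN := isCompressedHilbertFunction_gradedFinrank (by omega) htop hcompressed
  have h₀ := hN.apply_zero (by omega) (by omega)
  rw [← Nat.cast_zero, gradedFinrank_natCast] at h₀
  have := Module.nontrivial_of_finrank_pos (R := k) (M := quotComponent I 0) (by omega)
  have : Nontrivial (MvPolynomial (Fin c) k ⧸ I) := (quotComponent I 0).injective_subtype.nontrivial
  have hD := hpair.finrank_quotComponent_add_lt hIhom hd₁ hd₂ hθ₁ hθ₂
  rw [Fintype.card_fin, ← gradedFinrank_natCast] at hD
  exact hN.false_of_exactPairRelation hc hr2 hne hd₁ hd hD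
    (hpair.exactPairRelation hIhom htop hθ₁ hθ₂) (hpair.symm.exactPairRelation hIhom htop hθ₂ hθ₁)

/-- **Proposition (level case).** A compressed level algebra `S = P/I` of socle
degree `e`, type `r`, and codimension `c`, with `c, e, r ≥ 2` and `(e, r) ≠ (2, c−1)`,
has no homogeneous exact zero divisors. -/
theorem stmt_10 {k : Type*} [Field k] (c : ℕ)
    (I : Ideal (MvPolynomial (Fin c) k))
    -- `I` is homogeneous
    (hIhom : ∀ p ∈ I, ∀ j : ℕ, MvPolynomial.homogeneousComponent j p ∈ I)
    -- `[I]₀ = 0` and `[I]₁ = 0`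
    (hI0 : ∀ p ∈ I, MvPolynomial.IsHomogeneous p 0 → p = 0)
    (hI1 : ∀ p ∈ I, MvPolynomial.IsHomogeneous p 1 → p = 0)
    (e r : ℕ)
    -- `S` is a level algebra of socle degree `e` and type `r`:
    (hse : quotComponent I e ≠ ⊥)
    (htop : ∀ i : ℕ, e < i → quotComponent I i = ⊥)
    (hsocle : ∀ s : MvPolynomial (Fin c) k ⧸ I,
      (∀ q ∈ Ideal.span (Set.range (MvPolynomial.X : Fin c → MvPolynomial (Fin c) k)),
        s * Ideal.Quotient.mk I q = 0) ↔ s ∈ quotComponent I e)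
    (hr : r = Module.finrank k (quotComponent I e))
    -- `S` is compressed:
    (hcompressed : ∀ i : ℕ, i ≤ e →
      Module.finrank k (quotComponent I i) =
        min (Nat.choose (c - 1 + i) (c - 1)) (r * Nat.choose (c - 1 + (e - i)) (c - 1)))
    -- the numerical hypotheses of case (2)
    (hc : 2 ≤ c) (he : 2 ≤ e) (hr2 : 2 ≤ r) (hne : ¬(e = 2 ∧ r = c - 1)) :
    ¬ ∃ (d₁ d₂ : ℕ) (θ₁ θ₂ : MvPolynomial (Fin c) k ⧸ I),
        1 ≤ d₁ ∧ 1 ≤ d₂ ∧ θ₁ ∈ quotComponent I d₁ ∧ θ₂ ∈ quotComponent I d₂ ∧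
        IsExactZeroDivisorPair θ₁ θ₂ :=
  stmt_10_general c I hIhom e r htop hcompressed hc hr2 hne
end

section
/- Let a and b be positive integers with a ≤ b. If Σ_{i=0}^{a} (−1)^i C(a, i) C(b, i) = 0, then b divides a!. -/
/-!
If `b ∤ a!`, some prime power `p ^ k` divides `b` but not `a!`, hence divides none of
`1, …, a`. From `b * C(b - 1, i - 1) = i * C(b, i)` it follows that `p ∣ C(b, i)` for
`1 ≤ i ≤ a`, so the alternating sum is `≡ 1 (mod p)` and cannot vanish.
-/

namespace Nat

theorem Prime.dvd_choose_of_pow_dvd_of_not_pow_dvd {p k b i : ℕ} (hp : p.Prime)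
    (hb : p ^ k ∣ b) (hi : ¬p ^ k ∣ i) : p ∣ b.choose i := by
  obtain _ | j := i
  · exact absurd (dvd_zero _) hi
  obtain _ | n := b
  · simp
  by_contra hpc
  have hmul : p ^ k ∣ (n + 1).choose (j + 1) * (j + 1) :=
    add_one_mul_choose_eq n j ▸ hb.mul_right _
  exact hi ((hp.coprime_pow_of_not_dvd hpc).symm.dvd_of_dvd_mul_left hmul)

theorem exists_prime_dvd_choose_of_not_dvd_factorial {a b : ℕ} (h : ¬b ∣ a !) :
    ∃ p, p.Prime ∧ ∀ i ∈ Finset.Icc 1 a, p ∣ b.choose i := by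
  obtain ⟨p, k, hp, hb, hfac⟩ : ∃ p k, p.Prime ∧ p ^ k ∣ b ∧ ¬p ^ k ∣ a ! := by
    simpa [dvd_iff_prime_pow_dvd_dvd a ! b] using h
  refine ⟨p, hp, fun i hi => hp.dvd_choose_of_pow_dvd_of_not_pow_dvd hb fun hpi => ?_⟩
  obtain ⟨hi1, hia⟩ := Finset.mem_Icc.1 hi
  exact hfac (hpi.trans (dvd_factorial hi1 hia))

end Nat

theorem alternating_sum_choose_mul_choose_sub_one_dvd {a b p : ℕ}
    (h : ∀ i ∈ Finset.Icc 1 a, p ∣ b.choose i) :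
    (p : ℤ) ∣ ∑ i ∈ Finset.range (a + 1),
      (-1 : ℤ) ^ i * (a.choose i : ℤ) * (b.choose i : ℤ) - 1 := by
  rw [Finset.sum_range_succ']
  simp only [pow_zero, Nat.choose_zero_right, Nat.cast_one, mul_one, add_sub_cancel_right]
  refine Finset.dvd_sum fun i hi => Dvd.dvd.mul_left ?_ _
  exact Int.natCast_dvd_natCast.2 <|
    h (i + 1) (Finset.mem_Icc.2 ⟨by omega, by simpa using Finset.mem_range.1 hi⟩)

theorem stmt_18_general (a b : ℕ)
    (h : ∑ i ∈ Finset.range (a + 1),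
      (-1 : ℤ) ^ i * (a.choose i : ℤ) * (b.choose i : ℤ) = 0) :
    b ∣ Nat.factorial a := by
  by_contra hb
  obtain ⟨p, hp, hchoose⟩ := Nat.exists_prime_dvd_choose_of_not_dvd_factorial hb
  have hp1 : (p : ℤ) ∣ 1 := by
    simpa [h] using alternating_sum_choose_mul_choose_sub_one_dvd hchoose
  exact hp.one_lt.ne' (Nat.dvd_one.1 (Int.natCast_dvd_natCast.1 hp1))

/-- If `1 ≤ a ≤ b` and `Σ_{i=0}^{a} (−1)^i C(a,i) C(b,i) = 0`, then `b` divides `a!`. -/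
theorem stmt_18 (a b : ℕ) (ha : 0 < a) (hab : a ≤ b)
    (h : ∑ i ∈ Finset.range (a + 1),
      (-1 : ℤ) ^ i * (a.choose i : ℤ) * (b.choose i : ℤ) = 0) :
    b ∣ Nat.factorial a :=
  stmt_18_general a b h
end
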